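/- arXiv:1704.07473 — 10 statements merged into one kernel-verified Lean document; each statement's English description precedes it below -/
import Mathlib

section
/- Let A_1, …, A_n (n ≥ 3) be points in ℝ^m that do not all lie on one line, and let B_1, …, B_n be positive real numbers (weights). Then the function f(X) = Σ_{i=1}^n B_i‖X − A_i‖ attains its global minimum over ℝ^m at exactly one point A_0 (the weighted Fermat–Torricelli point exists and is unique). -/
/-- Existence and uniqueness of the weighted Fermat–Torricelli point for
`n ≥ 3` non-collinear points in `ℝ^m` with positive weights. -/
theorem weighted_fermat_torricelli_exists_unique
    (m n : ℕ) (hn : 3 ≤ n)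
    (A : Fin n → EuclideanSpace ℝ (Fin m))
    (B : Fin n → ℝ) (hB : ∀ i, 0 < B i)
    (hA : ¬ Collinear ℝ (Set.range A)) :
    ∃! A₀ : EuclideanSpace ℝ (Fin m),
      ∀ X : EuclideanSpace ℝ (Fin m),
        ∑ i, B i * ‖A₀ - A i‖ ≤ ∑ i, B i * ‖X - A i‖ := by
  set f : EuclideanSpace ℝ (Fin m) → ℝ := fun X => ∑ i, B i * ‖X - A i‖ with hf
  have hne : 0 < n := by omega
  let i₀ : Fin n := ⟨0, hne⟩
  -- continuity
  have hcont : Continuous f := by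
    apply continuous_finset_sum
    intro i _
    exact continuous_const.mul ((continuous_id.sub continuous_const).norm)
  -- coercivity
  have hcoer : Filter.Tendsto f (Filter.cocompact _) Filter.atTop := by
    have h1 : Filter.Tendsto (fun X : EuclideanSpace ℝ (Fin m) =>
        B i₀ * ‖X‖ + (-(B i₀ * ‖A i₀‖))) (Filter.cocompact _) Filter.atTop := by
      apply Filter.tendsto_atTop_add_const_right
      exact (tendsto_norm_cocompact_atTop).const_mul_atTop (hB i₀)
    apply Filter.tendsto_atTop_mono _ h1
    intro X
    have h2 : B i₀ * ‖X‖ + (-(B i₀ * ‖A i₀‖)) ≤ B i₀ * ‖X - A i₀‖ := by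
      have := norm_sub_norm_le X (A i₀)
      nlinarith [hB i₀]
    refine h2.trans ?_
    apply Finset.single_le_sum (f := fun i => B i * ‖X - A i‖) (fun i _ => ?_) (Finset.mem_univ i₀)
    exact mul_nonneg (hB i).le (norm_nonneg _)
  obtain ⟨x, hx⟩ := hcont.exists_forall_le hcoer
  refine ⟨x, hx, fun y hy => ?_⟩
  by_contra hxy
  -- y ≠ x; derive collinearity
  apply hA
  have hfxy : f x = f y := le_antisymm (hx y) (hy x)
  set z : EuclideanSpace ℝ (Fin m) := (2:ℝ)⁻¹ • (x + y) with hz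
  have hterm : ∀ i : Fin n, B i * ‖z - A i‖ = B i * ((‖x - A i‖ + ‖y - A i‖) / 2) := by
    have hle : ∀ i ∈ Finset.univ, B i * ‖z - A i‖ ≤ B i * ((‖x - A i‖ + ‖y - A i‖) / 2) := by
      intro i _
      have hz2 : z - A i = (2:ℝ)⁻¹ • ((x - A i) + (y - A i)) := by
        rw [hz]; module
      have : ‖z - A i‖ ≤ (‖x - A i‖ + ‖y - A i‖) / 2 := by
        rw [hz2, norm_smul]
        have := norm_add_le (x - A i) (y - A i)
        simp only [norm_inv, Real.norm_ofNat]
        linarith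
      exact mul_le_mul_of_nonneg_left this (hB i).le
    have hsum : ∑ i, B i * ‖z - A i‖ = ∑ i, B i * ((‖x - A i‖ + ‖y - A i‖) / 2) := by
      have hge : f x ≤ f z := hx z
      have h2 : ∑ i, B i * ((‖x - A i‖ + ‖y - A i‖) / 2) = (f x + f y) / 2 := by
        simp only [hf]
        rw [← Finset.sum_add_distrib, Finset.sum_div]
        exact Finset.sum_congr rfl fun i _ => by ring
      have h3 : (f x + f y)/2 = f x := by rw [hfxy]; ring
      have h4 : ∑ i, B i * ‖z - A i‖ ≤ ∑ i, B i * ((‖x - A i‖ + ‖y - A i‖) / 2) :=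
        Finset.sum_le_sum hle
      have h5 : f x ≤ ∑ i, B i * ‖z - A i‖ := hge
      rw [h2, h3]
      linarith
    intro i
    exact (Finset.sum_eq_sum_iff_of_le hle).mp hsum i (Finset.mem_univ i)
  -- each A i lies on line through x and y
  rw [collinear_iff_exists_forall_eq_smul_vadd]
  refine ⟨x, y - x, ?_⟩
  rintro p ⟨i, rfl⟩
  have hni : ‖(x - A i) + (y - A i)‖ = ‖x - A i‖ + ‖y - A i‖ := by
    have h := hterm i
    have hBi := (hB i).ne'
    have h6 : ‖z - A i‖ = (‖x - A i‖ + ‖y - A i‖) / 2 := mul_left_cancel₀ hBi h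
    have hz2 : z - A i = (2:ℝ)⁻¹ • ((x - A i) + (y - A i)) := by
      rw [hz]; module
    rw [hz2, norm_smul] at h6
    simp only [norm_inv, Real.norm_ofNat] at h6
    linarith
  have hsr : SameRay ℝ (x - A i) (y - A i) := sameRay_iff_norm_add.mpr hni
  rcases hsr with h | h | ⟨a, b, ha, hb, hab⟩
  · refine ⟨0, ?_⟩
    have hAx : A i = x := by
      have h' := sub_eq_zero.mp h; exact h'.symm
    simp [hAx]
  · refine ⟨1, ?_⟩
    have hAy : A i = y := by
      have h' := sub_eq_zero.mp h; exact h'.symm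
    simp [hAy]
  · have hane : a ≠ b := by
      rintro rfl
      have h7 := smul_right_injective (EuclideanSpace ℝ (Fin m)) ha.ne' hab
      exact hxy (sub_left_inj.mp h7).symm
    have hba : b - a ≠ 0 := fun h => hane (by linarith [sub_eq_zero.mp h])
    refine ⟨b / (b - a), ?_⟩
    have key : (b - a) • A i = b • y - a • x := by
      linear_combination (norm := module) hab
    have := smul_right_injective (EuclideanSpace ℝ (Fin m)) hba
    apply this
    show (b - a) • A i = (b - a) • ((b / (b - a)) • (y - x) +ᵥ x)
    rw [key]
    rw [vadd_eq_add, smul_add, smul_smul]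
    have hcoe : (b - a) * (b / (b - a)) = b := by rw [mul_comm, div_mul_cancel₀ _ hba]
    rw [hcoe]
    module
end

section
/- Let A_1, …, A_n (n ≥ 3) be points in ℝ^m that do not all lie on one line, with positive weights B_1, …, B_n. If there is an index i such that ‖Σ_{j≠i} B_j u(A_i, A_j)‖ ≤ B_i, then the vertex A_i minimizes f(X) = Σ_{j=1}^n B_j‖X − A_j‖, i.e. the weighted Fermat–Torricelli point is A_i (weighted absorbed case). -/
open scoped RealInnerProductSpace

/-- Weighted absorbed case: if at some vertex `A i` the norm of the resultant
`∑_{j ≠ i} B j • u(A i, A j)` is at most `B i`, then `A i` minimizes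
`X ↦ ∑ j, B j * ‖X - A j‖`, i.e. the weighted Fermat–Torricelli point is `A i`. -/
theorem weighted_fermat_torricelli_absorbed_case
    (m n : ℕ) (hn : 3 ≤ n)
    (A : Fin n → EuclideanSpace ℝ (Fin m))
    (B : Fin n → ℝ) (hB : ∀ i, 0 < B i)
    (hA : ¬ Collinear ℝ (Set.range A))
    (i : Fin n)
    (habs : ‖∑ j ∈ Finset.univ.erase i, B j • (‖A j - A i‖⁻¹ • (A j - A i))‖ ≤ B i) :
    ∀ X : EuclideanSpace ℝ (Fin m),
      ∑ j, B j * ‖A i - A j‖ ≤ ∑ j, B j * ‖X - A j‖ := by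
  intro X
  set v : EuclideanSpace ℝ (Fin m) := X - A i with hv
  set S : EuclideanSpace ℝ (Fin m) :=
    ∑ j ∈ Finset.univ.erase i, B j • (‖A j - A i‖⁻¹ • (A j - A i)) with hS
  -- key per-term bound for j ≠ i
  have key : ∀ j ∈ Finset.univ.erase i,
      B j * ‖A i - A j‖ - ⟪B j • (‖A j - A i‖⁻¹ • (A j - A i)), v⟫ ≤ B j * ‖X - A j‖ := by
    intro j hj
    by_cases h : A j = A i
    · simp [h, mul_nonneg (hB j).le (norm_nonneg _)]
    · have hd : (0:ℝ) < ‖A j - A i‖ := by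
        rw [norm_pos_iff]; exact sub_ne_zero_of_ne h
      set u : EuclideanSpace ℝ (Fin m) := ‖A j - A i‖⁻¹ • (A j - A i) with hu
      have hnu : ‖u‖ = 1 := by
        rw [hu, norm_smul, norm_inv, norm_norm, inv_mul_cancel₀ hd.ne']
      have h1 : ⟪-u, X - A j⟫ ≤ ‖X - A j‖ := by
        calc ⟪-u, X - A j⟫ ≤ ‖-u‖ * ‖X - A j‖ := real_inner_le_norm _ _
        _ = ‖X - A j‖ := by rw [norm_neg, hnu, one_mul]
      have h2 : ⟪-u, X - A j⟫ = ⟪-u, v⟫ + ‖A i - A j‖ := by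
        have hsplit : (X : EuclideanSpace ℝ (Fin m)) - A j = v + (A i - A j) := by
          rw [hv]; abel
        rw [hsplit, inner_add_right]
        congr 1
        have : -u = ‖A j - A i‖⁻¹ • (A i - A j) := by
          rw [hu, ← smul_neg, neg_sub]
        rw [this, real_inner_smul_left, real_inner_self_eq_norm_sq,
          norm_sub_rev (A i) (A j)]
        field_simp
      have h3 : ‖A i - A j‖ - ⟪u, v⟫ ≤ ‖X - A j‖ := by
        have := h2 ▸ h1
        rw [inner_neg_left] at this
        linarith
      have := mul_le_mul_of_nonneg_left h3 (hB j).le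
      rw [mul_sub] at this
      rwa [real_inner_smul_left]
  have hsum : ∑ j ∈ Finset.univ.erase i,
      (B j * ‖A i - A j‖ - ⟪B j • (‖A j - A i‖⁻¹ • (A j - A i)), v⟫)
      ≤ ∑ j ∈ Finset.univ.erase i, B j * ‖X - A j‖ :=
    Finset.sum_le_sum key
  rw [Finset.sum_sub_distrib, ← sum_inner] at hsum
  have hSv : ⟪S, v⟫ ≤ B i * ‖X - A i‖ := by
    calc ⟪S, v⟫ ≤ ‖S‖ * ‖v‖ := real_inner_le_norm _ _
    _ ≤ B i * ‖v‖ := mul_le_mul_of_nonneg_right habs (norm_nonneg _)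
    _ = B i * ‖X - A i‖ := by rw [hv]
  have e1 : ∑ j, B j * ‖A i - A j‖
      = ∑ j ∈ Finset.univ.erase i, B j * ‖A i - A j‖ := by
    rw [← Finset.add_sum_erase _ _ (Finset.mem_univ i)]
    simp
  have e2 : ∑ j, B j * ‖X - A j‖
      = B i * ‖X - A i‖ + ∑ j ∈ Finset.univ.erase i, B j * ‖X - A j‖ :=
    (Finset.add_sum_erase _ _ (Finset.mem_univ i)).symm
  rw [e1, e2]
  linarith [hsum, hSv]
end

section
/- Let u_1, u_2, u_3, u_4, u_5 be unit vectors in ℝ³ with u_1 and u_2 linearly independent, and write c_{ij} = ⟨u_i, u_j⟩. Then for each pair (p,q) ∈ {(3,4), (3,5), (4,5)} the inner product c_{pq} satisfies [c_{pq} − c_{1p}c_{1q} − (c_{2p} − c_{12}c_{1p})(c_{2q} − c_{12}c_{1q})/(1 − c_{12}²)]² = Π_{r∈{p,q}} (1 − (c_{2r}² + c_{1r}² − 2 c_{2r} c_{1r} c_{12})/(1 − c_{12}²)). In particular each of ⟨u_3,u_4⟩, ⟨u_3,u_5⟩, ⟨u_4,u_5⟩ is one of exactly two values explicitly determined by the seven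 inner products c_{12}, c_{13}, c_{14}, c_{15}, c_{23}, c_{24}, c_{25}, i.e. by the seven angles α_{102}, α_{103}, α_{104}, α_{105}, α_{203}, α_{204}, α_{205}. -/
/-!
Remove from each `u_i` its orthogonal projection onto the plane spanned by `u_1` and `u_2`.
The inner products of these perpendicular components are exactly the bracketed expressions of the
statement (the diagonal ones are the right-hand factors), and since they all lie on the line
orthogonal to the plane, Cauchy–Schwarz holds with equality for any two of them.
-/

open RealInnerProductSpace Module

theorem eq_add_sqrt_or_eq_sub_sqrt_of_sq_sub_eq {x m d : ℝ} (h : (x - m) ^ 2 = d) :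
    x = m + √d ∨ x = m - √d := by
  rw [← h, Real.sqrt_sq_eq_abs]
  rcases abs_choice (x - m) with h' | h' <;> rw [h']
  · left; ring
  · right; ring

section

variable {E : Type*} [NormedAddCommGroup E] [InnerProductSpace ℝ E]

theorem sq_real_inner_lt_one_of_linearIndependent {a b : E} (ha : ‖a‖ = 1) (hb : ‖b‖ = 1)
    (h : LinearIndependent ℝ ![a, b]) : ⟪a, b⟫ ^ 2 < 1 := by
  have hle : |⟪a, b⟫| ≤ 1 := by simpa [ha, hb] using abs_real_inner_le_norm a b
  have hne : |⟪a, b⟫| ≠ 1 := by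
    intro h1
    obtain ⟨-, r, -, rfl⟩ :=
      (abs_real_inner_div_norm_mul_norm_eq_one_iff a b).1 (by simpa [ha, hb] using h1)
    simpa using LinearIndependent.pair_iff.1 h r (-1) (by module)
  exact (sq_lt_one_iff_abs_lt_one _).2 (lt_of_le_of_ne hle hne)

theorem finrank_orthogonal_span_pair [FiniteDimensional ℝ E] {a b : E}
    (h : LinearIndependent ℝ ![a, b]) :
    finrank ℝ (Submodule.span ℝ {a, b})ᗮ = finrank ℝ E - 2 := by
  have h2 : finrank ℝ (Submodule.span ℝ {a, b}) = 2 := by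
    have := finrank_span_eq_card h
    rwa [Matrix.range_cons_cons_empty, Fintype.card_fin] at this
  have := (Submodule.span ℝ {a, b}).finrank_add_finrank_orthogonal
  omega

theorem mem_orthogonal_span_pair {a b v : E} :
    v ∈ (Submodule.span ℝ {a, b})ᗮ ↔ ⟪a, v⟫ = 0 ∧ ⟪b, v⟫ = 0 := by
  rw [Submodule.span_insert, ← Submodule.inf_orthogonal, Submodule.mem_inf,
    Submodule.mem_orthogonal_singleton_iff_inner_right,
    Submodule.mem_orthogonal_singleton_iff_inner_right]

theorem real_inner_sq_eq_of_finrank_eq_one {K : Submodule ℝ E} (hK : finrank ℝ K = 1)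
    {x y : E} (hx : x ∈ K) (hy : y ∈ K) : ⟪x, y⟫ ^ 2 = ⟪x, x⟫ * ⟪y, y⟫ := by
  obtain ⟨v, -, hv⟩ := finrank_eq_one_iff'.1 hK
  obtain ⟨s, hs⟩ := hv ⟨x, hx⟩
  obtain ⟨t, ht⟩ := hv ⟨y, hy⟩
  obtain rfl : s • (v : E) = x := congrArg Subtype.val hs
  obtain rfl : t • (v : E) = y := congrArg Subtype.val ht
  simp only [real_inner_smul_left, real_inner_smul_right]
  ring

/-- For unit `a` and `b`, the Gram–Schmidt vector `b - ⟪a, b⟫ • a` is orthogonal to `a` and has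
squared norm `1 - ⟪a, b⟫ ^ 2`, so this is `x` minus its projection onto `span {a, b}`. -/
noncomputable def perpComponent (a b x : E) : E :=
  x - ⟪a, x⟫ • a - ((⟪b, x⟫ - ⟪a, b⟫ * ⟪a, x⟫) / (1 - ⟪a, b⟫ ^ 2)) • (b - ⟪a, b⟫ • a)

theorem inner_perpComponent_fst {a : E} (ha : ‖a‖ = 1) (b x : E) :
    ⟪a, perpComponent a b x⟫ = 0 := by
  simp only [perpComponent, inner_sub_right, real_inner_smul_right, real_inner_self_eq_norm_sq, ha]
  ring

theorem inner_perpComponent_snd {a b : E} (hb : ‖b‖ = 1)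
    (hab : 1 - ⟪a, b⟫ ^ 2 ≠ 0) (x : E) : ⟪b, perpComponent a b x⟫ = 0 := by
  simp only [perpComponent, inner_sub_right, real_inner_smul_right, real_inner_self_eq_norm_sq,
    hb, real_inner_comm a b]
  field_simp
  ring

theorem perpComponent_mem_orthogonal {a b : E} (ha : ‖a‖ = 1) (hb : ‖b‖ = 1)
    (hab : 1 - ⟪a, b⟫ ^ 2 ≠ 0) (x : E) : perpComponent a b x ∈ (Submodule.span ℝ {a, b})ᗮ :=
  mem_orthogonal_span_pair.2 ⟨inner_perpComponent_fst ha b x, inner_perpComponent_snd hb hab x⟩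

theorem inner_perpComponent {a b : E} (ha : ‖a‖ = 1) (hb : ‖b‖ = 1)
    (hab : 1 - ⟪a, b⟫ ^ 2 ≠ 0) (x y : E) :
    ⟪perpComponent a b x, perpComponent a b y⟫ = ⟪x, y⟫ - ⟪a, x⟫ * ⟪a, y⟫
      - (⟪b, x⟫ - ⟪a, b⟫ * ⟪a, x⟫) * (⟪b, y⟫ - ⟪a, b⟫ * ⟪a, y⟫) / (1 - ⟪a, b⟫ ^ 2) := by
  have hxa : ⟪perpComponent a b x, a⟫ = 0 := by
    rw [real_inner_comm]; exact inner_perpComponent_fst ha b x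
  have hxb : ⟪perpComponent a b x, b⟫ = 0 := by
    rw [real_inner_comm]; exact inner_perpComponent_snd hb hab x
  nth_rw 2 [perpComponent]
  simp only [inner_sub_right, real_inner_smul_right, hxa, hxb]
  rw [real_inner_comm, perpComponent]
  simp only [inner_sub_right, real_inner_smul_right, real_inner_comm y]
  ring

theorem inner_perpComponent_self {a b x : E} (ha : ‖a‖ = 1) (hb : ‖b‖ = 1)
    (hab : 1 - ⟪a, b⟫ ^ 2 ≠ 0) (hx : ‖x‖ = 1) :
    ⟪perpComponent a b x, perpComponent a b x⟫
      = 1 - (⟪b, x⟫ ^ 2 + ⟪a, x⟫ ^ 2 - 2 * ⟪b, x⟫ * ⟪a, x⟫ * ⟪a, b⟫) / (1 - ⟪a, b⟫ ^ 2) := by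
  rw [inner_perpComponent ha hb hab, real_inner_self_eq_norm_sq, hx]
  field_simp
  ring

end

/-- For unit vectors `u₁, …, u₅` in `ℝ³` with `u₁, u₂` linearly independent,
each of the inner products `⟪u_p, u_q⟫` for `p, q ∈ {3,4,5}`, `p ≠ q`, satisfies an
explicit quadratic equation in terms of the seven inner products
`c₁₂, c₁₃, c₁₄, c₁₅, c₂₃, c₂₄, c₂₅`; in particular each is one of the two explicitly
determined roots. -/
theorem cos_angles_hexahedron_quadratic
    (u : Fin 5 → EuclideanSpace ℝ (Fin 3))
    (hu : ∀ i, ‖u i‖ = 1)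
    (hind : LinearIndependent ℝ ![u 0, u 1])
    (c : Fin 5 → Fin 5 → ℝ)
    (hc : ∀ i j, c i j = ⟪u i, u j⟫) :
    ∀ p q : Fin 5, 2 ≤ (p : ℕ) → 2 ≤ (q : ℕ) → p ≠ q →
      ((c p q - c 0 p * c 0 q
            - (c 1 p - c 0 1 * c 0 p) * (c 1 q - c 0 1 * c 0 q) / (1 - c 0 1 ^ 2)) ^ 2
          = (1 - ((c 1 p) ^ 2 + (c 0 p) ^ 2 - 2 * c 1 p * c 0 p * c 0 1) / (1 - c 0 1 ^ 2))
            * (1 - ((c 1 q) ^ 2 + (c 0 q) ^ 2 - 2 * c 1 q * c 0 q * c 0 1) / (1 - c 0 1 ^ 2))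
        ∧ (c p q = c 0 p * c 0 q
              + (c 1 p - c 0 1 * c 0 p) * (c 1 q - c 0 1 * c 0 q) / (1 - c 0 1 ^ 2)
              + Real.sqrt
                ((1 - ((c 1 p) ^ 2 + (c 0 p) ^ 2 - 2 * c 1 p * c 0 p * c 0 1) / (1 - c 0 1 ^ 2))
                  * (1 - ((c 1 q) ^ 2 + (c 0 q) ^ 2 - 2 * c 1 q * c 0 q * c 0 1) / (1 - c 0 1 ^ 2)))
          ∨ c p q = c 0 p * c 0 q
              + (c 1 p - c 0 1 * c 0 p) * (c 1 q - c 0 1 * c 0 q) / (1 - c 0 1 ^ 2)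
              - Real.sqrt
                ((1 - ((c 1 p) ^ 2 + (c 0 p) ^ 2 - 2 * c 1 p * c 0 p * c 0 1) / (1 - c 0 1 ^ 2))
                  * (1 - ((c 1 q) ^ 2 + (c 0 q) ^ 2 - 2 * c 1 q * c 0 q * c 0 1) / (1 - c 0 1 ^ 2))))) := by
  intro p q _ _ _
  simp only [hc]
  have hab : 1 - ⟪u 0, u 1⟫ ^ 2 ≠ 0 :=
    (sub_pos.2 (sq_real_inner_lt_one_of_linearIndependent (hu 0) (hu 1) hind)).ne'
  have hline : finrank ℝ (Submodule.span ℝ {u 0, u 1})ᗮ = 1 := by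
    rw [finrank_orthogonal_span_pair hind, finrank_euclideanSpace_fin]
  have key := real_inner_sq_eq_of_finrank_eq_one hline
    (perpComponent_mem_orthogonal (hu 0) (hu 1) hab (u p))
    (perpComponent_mem_orthogonal (hu 0) (hu 1) hab (u q))
  rw [inner_perpComponent (hu 0) (hu 1) hab, inner_perpComponent_self (hu 0) (hu 1) hab (hu p),
    inner_perpComponent_self (hu 0) (hu 1) hab (hu q)] at key
  exact ⟨key, eq_add_sqrt_or_eq_sub_sqrt_of_sq_sub_eq (by rwa [← sub_sub])⟩
end

section
/- (Geometric plasticity principle.) Let A_1, …, A_5 be points of a closed polyhedron in ℝ³, not all collinear, with positive weights B_1, …, B_5 such that the floating case holds: for every i, ‖Σ_{j≠i} B_j u(A_i, A_j)‖ > B_i. Let A_0 be the (unique) weighted Fermat–Torricelli point of A_1,…,A_5, and for each i let A_i' = A_0 + t_i (A_i − A_0) with t_i > 0 be a point on the ray from A_0 through A_i, carrying the same weight B_i. Assume that the new configuration again satisfies the floating condition: for every i, ‖Σ_{j≠i} B_j u(A_i', A_j')‖ > B_i. Then the weighted Fermat–Torricelli point A_0' of A_1', …, A_5' (with weights B_1,…,B_5)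 is identical to A_0. -/
/-!
A point `X` minimises `Y ↦ ∑ i, B i * ‖Y - A i‖` if and only if `⟪d, R⟫ ≤ σ * ‖d‖` for every
direction `d`, where `R = ∑ i, B i • u(X, A i)` is the resultant of the weighted unit vectors
towards the `A i` and `σ` is the total weight of the `A i` equal to `X`: sufficiency is the
supporting-hyperplane inequality for each norm, necessity a second-order expansion of the cost
along `X + s • d` as `s → 0⁺`. Moving each `A i` along its ray from `X` changes neither `R` nor
`σ`, so `A₀` still minimises the new cost. For uniqueness, the midpoint of two minimisers is
again a minimiser, which forces every triangle inequality between `X - A' i` and `Y - A' i` to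
be tight: all `A' i` lie on the line through the two minimisers, and since one of them is `A₀`,
so do all `A i`.
-/

open RealInnerProductSpace Finset Filter Topology

lemma norm_sub_smul_le {E : Type*} [NormedAddCommGroup E] [InnerProductSpace ℝ E]
    {v : E} (hv : v ≠ 0) (d : E) (s : ℝ) :
    ‖v - s • d‖ ≤ ‖v‖ - s * ⟪d, v⟫ / ‖v‖ + s ^ 2 * ‖d‖ ^ 2 / (2 * ‖v‖) := by
  have hv : 0 < ‖v‖ := norm_pos_iff.mpr hv
  have hsq : ‖v - s • d‖ ^ 2 = ‖v‖ ^ 2 - 2 * (s * ⟪d, v⟫) + s ^ 2 * ‖d‖ ^ 2 := by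
    rw [norm_sub_sq_real, real_inner_smul_right, real_inner_comm, norm_smul, mul_pow,
      Real.norm_eq_abs, sq_abs]
  -- AM–GM: `2 ‖v‖ x ≤ x ^ 2 + ‖v‖ ^ 2` for `x = ‖v - s • d‖`
  calc ‖v - s • d‖ ≤ (‖v - s • d‖ ^ 2 + ‖v‖ ^ 2) / (2 * ‖v‖) := by
        rw [le_div_iff₀ (by positivity)]
        linarith [two_mul_le_add_sq ‖v‖ ‖v - s • d‖]
    _ = _ := by rw [hsq]; field_simp; ring

theorem Collinear.subset_affineSpan {k V P : Type*} [DivisionRing k] [AddCommGroup V] [Module k V]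
    [AddTorsor V P] {s₁ s₂ : Set P} (hs : s₁ ⊆ affineSpan k s₂) (h : Collinear k s₂) :
    Collinear k s₁ :=
  (Submodule.rank_mono (vectorSpan_mono k hs)).trans <| by
    rwa [← AffineSubspace.direction_eq_vectorSpan, direction_affineSpan]

lemma mem_affineSpan_pair_of_sameRay_sub {E : Type*} [AddCommGroup E] [Module ℝ E] {a x y : E}
    (h : SameRay ℝ (x - a) (y - a)) (hxy : x ≠ y) : a ∈ line[ℝ, x, y] := by
  obtain ⟨e, α, β, -, -, -, hx, hy⟩ := h.exists_eq_smul
  have hyx : y - x = (β - α) • e := by rw [sub_smul, ← hx, ← hy]; abel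
  have hβα : β - α ≠ 0 := fun h => hxy (eq_of_sub_eq_zero (by rw [hyx, h, zero_smul])).symm
  convert AffineMap.lineMap_mem_affineSpan_pair (-α / (β - α)) x y using 1
  rw [AffineMap.lineMap_apply, vsub_eq_sub, vadd_eq_add, hyx, smul_smul,
    div_mul_cancel₀ _ hβα, neg_smul, ← hx]
  abel

noncomputable section

namespace FermatTorricelli

variable {E : Type*} [NormedAddCommGroup E] [InnerProductSpace ℝ E]

def unitDir (P Q : E) : E := ‖Q - P‖⁻¹ • (Q - P)

@[simp] lemma unitDir_self (P : E) : unitDir P P = 0 := by simp [unitDir]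

lemma norm_unitDir_le (P Q : E) : ‖unitDir P Q‖ ≤ 1 := by
  rw [unitDir, norm_smul, norm_inv, norm_norm]
  exact inv_mul_le_one

lemma inner_sub_unitDir (P Q : E) : ⟪Q - P, unitDir P Q⟫ = ‖Q - P‖ := by
  rw [unitDir, real_inner_smul_right, real_inner_self_eq_norm_sq]
  rcases eq_or_ne ‖Q - P‖ 0 with h | h
  · simp [h]
  · field_simp

lemma unitDir_add_smul_sub (P Q : E) {t : ℝ} (ht : 0 < t) :
    unitDir P (P + t • (Q - P)) = unitDir P Q := by
  rw [unitDir, unitDir, add_sub_cancel_left, norm_smul, Real.norm_eq_abs, abs_of_pos ht, smul_smul]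
  congr 1
  field_simp

variable {ι : Type*} [Fintype ι]

def cost (B : ι → ℝ) (A : ι → E) (X : E) : ℝ := ∑ i, B i * ‖X - A i‖

def IsFermatPoint (B : ι → ℝ) (A : ι → E) (X : E) : Prop := ∀ Y, cost B A X ≤ cost B A Y

def resultant (B : ι → ℝ) (A : ι → E) (X : E) : E := ∑ i, B i • unitDir X (A i)

open Classical in
def coincidentWeight (B : ι → ℝ) (A : ι → E) (X : E) : ℝ := ∑ i, if A i = X then B i else 0

variable {B : ι → ℝ} {A : ι → E}

lemma cost_add_smul_le (hB : ∀ i, 0 ≤ B i) (X d : E) {s : ℝ} (hs : 0 ≤ s) :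
    cost B A (X + s • d) ≤ cost B A X - s * ⟪d, resultant B A X⟫
      + s * coincidentWeight B A X * ‖d‖ + s ^ 2 * ∑ i, B i * ‖d‖ ^ 2 / (2 * ‖A i - X‖) := by
  classical
  -- when `A i = X` the last summand is `0` because `x / 0 = 0`
  have term : ∀ a : E, ‖X + s • d - a‖ ≤ ‖X - a‖ - s * ⟪d, unitDir X a⟫
      + (if a = X then s * ‖d‖ else 0) + s ^ 2 * ‖d‖ ^ 2 / (2 * ‖a - X‖) := by
    intro a
    by_cases h : a = X
    · subst h; simp [norm_smul, abs_of_nonneg hs]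
    · have hv : a - X ≠ 0 := sub_ne_zero.mpr h
      have key := norm_sub_smul_le hv d s
      rw [← norm_neg, neg_sub, norm_sub_rev X a, if_neg h, unitDir, real_inner_smul_right]
      calc ‖a - (X + s • d)‖ = ‖a - X - s • d‖ := by rw [sub_add_eq_sub_sub]
        _ ≤ _ := key
        _ = _ := by ring
  calc cost B A (X + s • d)
      ≤ ∑ i, B i * (‖X - A i‖ - s * ⟪d, unitDir X (A i)⟫
          + (if A i = X then s * ‖d‖ else 0) + s ^ 2 * ‖d‖ ^ 2 / (2 * ‖A i - X‖)) :=
        sum_le_sum fun i _ => mul_le_mul_of_nonneg_left (term (A i)) (hB i)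
    _ = _ := by
        simp only [cost, resultant, coincidentWeight, inner_sum, real_inner_smul_right, mul_add,
          mul_sub, sum_add_distrib, sum_sub_distrib, mul_sum, sum_mul, mul_ite, ite_mul, mul_zero,
          zero_mul, mul_assoc, mul_left_comm, mul_div_assoc]

lemma cost_sub_inner_resultant_add_le (hB : ∀ i, 0 ≤ B i) (X Y : E) :
    cost B A X - ⟪Y - X, resultant B A X⟫ + coincidentWeight B A X * ‖Y - X‖ ≤ cost B A Y := by
  classical
  have term : ∀ a : E,
      ‖X - a‖ - ⟪Y - X, unitDir X a⟫ + (if a = X then ‖Y - X‖ else 0) ≤ ‖Y - a‖ := by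
    intro a
    by_cases h : a = X
    · subst h; simp
    · rw [if_neg h, add_zero, ← norm_sub_rev a X, ← inner_sub_unitDir, ← inner_sub_left,
        sub_sub_sub_cancel_right, norm_sub_rev Y a]
      calc ⟪a - Y, unitDir X a⟫ ≤ ‖a - Y‖ * ‖unitDir X a‖ := real_inner_le_norm _ _
        _ ≤ ‖a - Y‖ := mul_le_of_le_one_right (norm_nonneg _) (norm_unitDir_le X a)
  calc cost B A X - ⟪Y - X, resultant B A X⟫ + coincidentWeight B A X * ‖Y - X‖
      = ∑ i, B i * (‖X - A i‖ - ⟪Y - X, unitDir X (A i)⟫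
          + (if A i = X then ‖Y - X‖ else 0)) := by
        simp only [cost, resultant, coincidentWeight, inner_sum, real_inner_smul_right, mul_add,
          mul_sub, sum_add_distrib, sum_sub_distrib, sum_mul, mul_ite, ite_mul, mul_zero, zero_mul]
    _ ≤ cost B A Y := sum_le_sum fun i _ => mul_le_mul_of_nonneg_left (term (A i)) (hB i)

lemma isFermatPoint_iff_inner_resultant_le (hB : ∀ i, 0 ≤ B i) (X : E) :
    IsFermatPoint B A X ↔ ∀ d, ⟪d, resultant B A X⟫ ≤ coincidentWeight B A X * ‖d‖ := by
  refine ⟨fun hX d => ?_, fun h Y => ?_⟩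
  · set K := ∑ i, B i * ‖d‖ ^ 2 / (2 * ‖A i - X‖)
    have hs : ∀ s > 0, ⟪d, resultant B A X⟫ - coincidentWeight B A X * ‖d‖ ≤ s * K := by
      intro s hs
      have := (hX (X + s • d)).trans (cost_add_smul_le hB X d hs.le)
      nlinarith
    have hK : Tendsto (fun s => s * K) (𝓝[>] 0) (𝓝 0) :=
      ((continuous_mul_const K).tendsto' 0 0 (zero_mul K)).mono_left nhdsWithin_le_nhds
    linarith [ge_of_tendsto hK (eventually_nhdsWithin_of_forall hs)]
  · linarith [cost_sub_inner_resultant_add_le (A := A) hB X Y, h (Y - X)]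

lemma resultant_add_smul_sub {t : ι → ℝ} (ht : ∀ i, 0 < t i) (X : E) :
    resultant B (fun i => X + t i • (A i - X)) X = resultant B A X := by
  simp only [resultant, unitDir_add_smul_sub X _ (ht _)]

lemma coincidentWeight_add_smul_sub {t : ι → ℝ} (ht : ∀ i, 0 < t i) (X : E) :
    coincidentWeight B (fun i => X + t i • (A i - X)) X = coincidentWeight B A X := by
  refine sum_congr rfl fun i _ => ?_
  classical
  exact if_congr (by simp [(ht i).ne', sub_eq_zero]) rfl rfl

theorem isFermatPoint_add_smul_sub_iff (hB : ∀ i, 0 ≤ B i) {t : ι → ℝ} (ht : ∀ i, 0 < t i)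
    (X : E) : IsFermatPoint B (fun i => X + t i • (A i - X)) X ↔ IsFermatPoint B A X := by
  rw [isFermatPoint_iff_inner_resultant_le hB, isFermatPoint_iff_inner_resultant_le hB,
    resultant_add_smul_sub ht, coincidentWeight_add_smul_sub ht]

lemma IsFermatPoint.sameRay (hB : ∀ i, 0 < B i) {X Y : E} (hX : IsFermatPoint B A X)
    (hY : IsFermatPoint B A Y) (i : ι) : SameRay ℝ (X - A i) (Y - A i) := by
  set M : E := (2 : ℝ)⁻¹ • (X + Y)
  have hM : ∀ a, ‖M - a‖ = ‖X - a + (Y - a)‖ / 2 := fun a => by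
    rw [show M - a = (2 : ℝ)⁻¹ • (X - a + (Y - a)) by module, norm_smul]
    norm_num
    ring
  have hle : ∀ j ∈ univ, B j * ‖M - A j‖ ≤ B j * ((‖X - A j‖ + ‖Y - A j‖) / 2) := fun j _ => by
    rw [hM]
    gcongr
    · exact (hB j).le
    · exact norm_add_le _ _
  -- `M` is again a minimiser, so every triangle inequality above is an equality
  have hsum : ∑ j, B j * ‖M - A j‖ = ∑ j, B j * ((‖X - A j‖ + ‖Y - A j‖) / 2) := by
    refine le_antisymm (sum_le_sum hle) ?_
    have hXM := hX M
    have hYM := hY M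
    simp only [cost] at hXM hYM
    simp only [mul_div_assoc', mul_add, ← sum_div, sum_add_distrib]
    linarith
  have hi := mul_left_cancel₀ (hB i).ne' ((sum_eq_sum_iff_of_le hle).1 hsum i (mem_univ i))
  rw [hM] at hi
  rw [sameRay_iff_norm_add]
  linarith

end FermatTorricelli

end

open FermatTorricelli in
theorem geometric_plasticity_principle_general
    (A : Fin 5 → EuclideanSpace ℝ (Fin 3))
    (hA : ¬ Collinear ℝ (Set.range A))
    (B : Fin 5 → ℝ) (hB : ∀ i, 0 < B i)
    (A₀ : EuclideanSpace ℝ (Fin 3))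
    (hmin : ∀ X : EuclideanSpace ℝ (Fin 3),
      ∑ i, B i * ‖A₀ - A i‖ ≤ ∑ i, B i * ‖X - A i‖)
    (t : Fin 5 → ℝ) (ht : ∀ i, 0 < t i)
    (A' : Fin 5 → EuclideanSpace ℝ (Fin 3))
    (hA' : ∀ i, A' i = A₀ + t i • (A i - A₀)) :
    (∀ X : EuclideanSpace ℝ (Fin 3),
        ∑ i, B i * ‖A₀ - A' i‖ ≤ ∑ i, B i * ‖X - A' i‖) ∧
      ∀ A₀' : EuclideanSpace ℝ (Fin 3),
        (∀ X : EuclideanSpace ℝ (Fin 3),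
          ∑ i, B i * ‖A₀' - A' i‖ ≤ ∑ i, B i * ‖X - A' i‖) → A₀' = A₀ := by
  obtain rfl : A' = fun i => A₀ + t i • (A i - A₀) := funext hA'
  have hmin' : IsFermatPoint B (fun i => A₀ + t i • (A i - A₀)) A₀ :=
    (isFermatPoint_add_smul_sub_iff (fun i => (hB i).le) ht A₀).2 hmin
  refine ⟨hmin', fun A₀' hA₀' => ?_⟩
  by_contra hne
  refine hA ((collinear_pair ℝ A₀' A₀).subset_affineSpan ?_)
  rintro _ ⟨i, rfl⟩
  have hA'i := mem_affineSpan_pair_of_sameRay_sub (IsFermatPoint.sameRay hB hA₀' hmin' i) hne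
  have hAi : A i = AffineMap.lineMap A₀ (A₀ + t i • (A i - A₀)) (t i)⁻¹ := by
    rw [AffineMap.lineMap_apply, vsub_eq_sub, vadd_eq_add, add_sub_cancel_left, smul_smul,
      inv_mul_cancel₀ (ht i).ne', one_smul, sub_add_cancel]
  rw [hAi]
  exact AffineMap.lineMap_mem _ (right_mem_affineSpan_pair ℝ A₀' A₀) hA'i

/-- Geometric plasticity principle: if the five boundary points of a closed polyhedron
are moved along the rays from the weighted Fermat–Torricelli point `A₀` through the
respective vertices (keeping the same weights), and the floating condition still holds
for the new configuration, then the weighted Fermat–Torricelli point of the new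
configuration is identical to `A₀`. -/
theorem geometric_plasticity_principle
    (A : Fin 5 → EuclideanSpace ℝ (Fin 3))
    (hA : ¬ Collinear ℝ (Set.range A))
    (B : Fin 5 → ℝ) (hB : ∀ i, 0 < B i)
    (hfloat : ∀ i, B i <
      ‖∑ j ∈ Finset.univ.erase i, B j • (‖A j - A i‖⁻¹ • (A j - A i))‖)
    (A₀ : EuclideanSpace ℝ (Fin 3))
    (hmin : ∀ X : EuclideanSpace ℝ (Fin 3),
      ∑ i, B i * ‖A₀ - A i‖ ≤ ∑ i, B i * ‖X - A i‖)
    (t : Fin 5 → ℝ) (ht : ∀ i, 0 < t i)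
    (A' : Fin 5 → EuclideanSpace ℝ (Fin 3))
    (hA' : ∀ i, A' i = A₀ + t i • (A i - A₀))
    (hfloat' : ∀ i, B i <
      ‖∑ j ∈ Finset.univ.erase i, B j • (‖A' j - A' i‖⁻¹ • (A' j - A' i))‖) :
    (∀ X : EuclideanSpace ℝ (Fin 3),
        ∑ i, B i * ‖A₀ - A' i‖ ≤ ∑ i, B i * ‖X - A' i‖) ∧
      ∀ A₀' : EuclideanSpace ℝ (Fin 3),
        (∀ X : EuclideanSpace ℝ (Fin 3),
          ∑ i, B i * ‖A₀' - A' i‖ ≤ ∑ i, B i * ‖X - A' i‖) → A₀' = A₀ :=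
  geometric_plasticity_principle_general A hA B hB A₀ hmin t ht A' hA'
end

section
/- Let A_1A_2A_3A_4 be a non-degenerate tetrahedron in ℝ³ (the four vertices are affinely independent) and let A_0 be a point in its interior. Set u_i = u(A_0, A_i), and for each pair p, q let n_{pq} be a unit normal vector to the plane span{u_p, u_q}. Let c > 0, B̄_0 ≥ 0, and suppose B̄_1, B̄_2, B̄_3, B̄_4 > 0 satisfy B̄_1 + B̄_2 + B̄_3 + B̄_4 = c, B̄_1 + B̄_2 + B̄_3 = B̄_4 + B̄_0, and A_0 minimizes X ↦ Σ_{i=1}^4 B̄_i‖X − A_i‖. Then B̄_4 = (c − B̄_0)/2, B̄_1 = (|⟨u_4, n_{23}⟩| / |⟨u_1, n_{23}⟩|)·(c − B̄_0)/2, B̄_2 = (|⟨u_4, n_{13}⟩| / |⟨u_2, n_{13}⟩|)·(c − B̄_0)/2, and B̄_3 = (|⟨u_4, n_{12}⟩| / |⟨u_3, n_{12}⟩|)·(c − B̄_0)/2. In particular the weights are not determined by A_0 and c alone: they depend on the residual weight B̄_0 (negative answer to the inverse mixed weighted Fermat–Torricelli problem for tetrahedra). -/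
/-!
Since `A₀` is interior, it is none of the vertices, so `X ↦ ∑ B̄ᵢ‖X − Aᵢ‖` is differentiable at
its minimum `A₀`, and the vanishing of the derivative says that the weighted unit vectors
balance: `∑ B̄ᵢ uᵢ = 0`. Pairing with `n₂₃`, which is orthogonal to `u₂` and `u₃`, leaves
`B̄₁⟨u₁, n₂₃⟩ + B̄₄⟨u₄, n₂₃⟩ = 0`, and likewise for `n₁₃` and `n₁₂`. Here `⟨u₁, n₂₃⟩ ≠ 0`, for
otherwise `n₂₃` would be orthogonal to every `Aᵢ − A₀`, hence to the whole space, which the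
tetrahedron spans. The value of `B̄₄` is linear arithmetic on the two mass constraints.
-/

open RealInnerProductSpace

section InnerProductSpace

variable {E : Type*} [NormedAddCommGroup E] [InnerProductSpace ℝ E]

theorem hasFDerivAt_norm_of_ne_zero {x : E} (hx : x ≠ 0) :
    HasFDerivAt (‖·‖) (‖x‖⁻¹ • innerSL ℝ x) x := by
  have h := (hasStrictFDerivAt_norm_sq x).hasFDerivAt.sqrt (by positivity)
  simp only [Real.sqrt_sq (norm_nonneg _)] at h
  convert h using 1
  ext v
  simp only [smul_apply, coe_innerSL_apply, smul_eq_mul, one_div, mul_inv_rev,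
    nsmul_eq_mul, Nat.cast_ofNat]
  field_simp

theorem IsLocalMin.sum_smul_inv_norm_smul_sub_eq_zero {ι : Type*} [Fintype ι] {w : ι → ℝ}
    {A : ι → E} {x : E} (hmin : IsLocalMin (fun X => ∑ i, w i * ‖X - A i‖) x)
    (hx : ∀ i, x ≠ A i) :
    ∑ i, w i • (‖A i - x‖⁻¹ • (A i - x)) = 0 := by
  have hderiv : HasFDerivAt (fun X => ∑ i, w i * ‖X - A i‖)
      (innerSL ℝ (∑ i, w i • (‖x - A i‖⁻¹ • (x - A i)))) x := by
    simp only [map_sum, map_smul]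
    refine HasFDerivAt.fun_sum fun i _ => ?_
    have h := (hasFDerivAt_norm_of_ne_zero (sub_ne_zero.mpr (hx i))).comp x
      ((hasFDerivAt_id x).sub_const (A i))
    simpa using h.const_mul (w i)
  have hzero := hmin.hasFDerivAt_eq_zero hderiv
  rw [← norm_eq_zero, innerSL_apply_norm, norm_eq_zero] at hzero
  simp_rw [norm_sub_rev (A _) x, ← neg_sub x, smul_neg, Finset.sum_neg_distrib, hzero, neg_zero]

theorem eq_zero_of_forall_inner_sub_eq_zero_of_affineSpan_eq_top {ι : Type*} {A : ι → E}
    (hA : affineSpan ℝ (Set.range A) = ⊤) (p : E) {n : E} (hn : ∀ i, ⟪A i - p, n⟫ = 0) :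
    n = 0 := by
  have hle : vectorSpan ℝ (Set.range A) ≤ (ℝ ∙ n)ᗮ := by
    rw [vectorSpan_def, Submodule.span_le]
    rintro _ ⟨_, ⟨i, rfl⟩, _, ⟨j, rfl⟩, rfl⟩
    rw [SetLike.mem_coe, Submodule.mem_orthogonal_singleton_iff_inner_left]
    change ⟪A i - A j, n⟫ = 0
    rw [← sub_sub_sub_cancel_right _ _ p, inner_sub_left, hn i, hn j, sub_zero]
  rw [← direction_affineSpan, hA, AffineSubspace.direction_top] at hle
  exact inner_self_eq_zero.mp
    (Submodule.mem_orthogonal_singleton_iff_inner_left.mp (hle Submodule.mem_top))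

theorem eq_abs_div_abs_mul_of_mul_add_mul_eq_zero {a b x y : ℝ} (ha : 0 ≤ a) (hb : 0 ≤ b)
    (hx : x ≠ 0) (h : a * x + b * y = 0) : a = |y| / |x| * b := by
  have habs : a * |x| = b * |y| := by
    rw [← abs_of_nonneg ha, ← abs_of_nonneg hb, ← abs_mul, ← abs_mul,
      eq_neg_of_add_eq_zero_left h, abs_neg]
  field_simp
  linarith

theorem eq_abs_inner_div_abs_inner_mul_of_sum_smul_eq_zero {ι : Type*} [Fintype ι]
    [DecidableEq ι] {B : ι → ℝ} {u : ι → E} (hstat : ∑ i, B i • u i = 0)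
    (hu : ∀ n, (∀ i, ⟪u i, n⟫ = 0) → n = 0) {n : E} (hn : n ≠ 0) {r s : ι} (hrs : r ≠ s)
    (hr : 0 ≤ B r) (hs : 0 < B s) (hother : ∀ i, i ≠ r → i ≠ s → ⟪u i, n⟫ = 0) :
    B r = |⟪u s, n⟫| / |⟪u r, n⟫| * B s := by
  have hpair : B r * ⟪u r, n⟫ + B s * ⟪u s, n⟫ = 0 := by
    have h := congrArg (⟪·, n⟫) hstat
    simp only [sum_inner, real_inner_smul_left, inner_zero_left] at h
    rwa [Fintype.sum_eq_add r s hrs fun i hi => by rw [hother i hi.1 hi.2, mul_zero]] at h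
  refine eq_abs_div_abs_mul_of_mul_add_mul_eq_zero hr hs.le
    (fun hx => hn (hu n fun i => ?_)) hpair
  have hy : ⟪u s, n⟫ = 0 := by simpa [hx, hs.ne'] using hpair
  rcases eq_or_ne i r with rfl | hir
  · exact hx
  rcases eq_or_ne i s with rfl | his
  · exact hy
  exact hother i hir his

end InnerProductSpace

theorem AffineIndependent.ne_of_mem_interior_convexHull {ι F : Type*} [Finite ι] [Nontrivial ι]
    [NormedAddCommGroup F] [NormedSpace ℝ F] {A : ι → F} (hA : AffineIndependent ℝ A)
    (hspan : affineSpan ℝ (Set.range A) = ⊤) {x : F}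
    (hx : x ∈ interior (convexHull ℝ (Set.range A))) (i : ι) : x ≠ A i := by
  let b : AffineBasis ι ℝ F := ⟨A, hA, hspan⟩
  rintro rfl
  obtain ⟨j, hj⟩ := exists_ne i
  have hb : b i ∈ interior (convexHull ℝ (Set.range b)) := hx
  rw [b.interior_convexHull] at hb
  exact (hb j).ne' (b.coord_apply_ne hj)

theorem inverse_mixed_weighted_fermat_torricelli_tetrahedron_general
    (A : Fin 4 → EuclideanSpace ℝ (Fin 3))
    (hA : AffineIndependent ℝ A)
    (A₀ : EuclideanSpace ℝ (Fin 3))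
    (hA₀ : A₀ ∈ interior (convexHull ℝ (Set.range A)))
    (u : Fin 4 → EuclideanSpace ℝ (Fin 3))
    (hu : ∀ i, u i = ‖A i - A₀‖⁻¹ • (A i - A₀))
    (n23 n13 n12 : EuclideanSpace ℝ (Fin 3))
    (hn23 : ‖n23‖ = 1 ∧ ⟪u 1, n23⟫ = 0 ∧ ⟪u 2, n23⟫ = 0)
    (hn13 : ‖n13‖ = 1 ∧ ⟪u 0, n13⟫ = 0 ∧ ⟪u 2, n13⟫ = 0)
    (hn12 : ‖n12‖ = 1 ∧ ⟪u 0, n12⟫ = 0 ∧ ⟪u 1, n12⟫ = 0)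
    (c B₀ : ℝ)
    (B : Fin 4 → ℝ) (hB : ∀ i, 0 < B i)
    (hsum : B 0 + B 1 + B 2 + B 3 = c)
    (hflow : B 0 + B 1 + B 2 = B 3 + B₀)
    (hmin : ∀ X : EuclideanSpace ℝ (Fin 3),
      ∑ i, B i * ‖A₀ - A i‖ ≤ ∑ i, B i * ‖X - A i‖) :
    B 3 = (c - B₀) / 2 ∧
    B 0 = (|⟪u 3, n23⟫| / |⟪u 0, n23⟫|) * ((c - B₀) / 2) ∧
    B 1 = (|⟪u 3, n13⟫| / |⟪u 1, n13⟫|) * ((c - B₀) / 2) ∧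
    B 2 = (|⟪u 3, n12⟫| / |⟪u 2, n12⟫|) * ((c - B₀) / 2) := by
  have hspan : affineSpan ℝ (Set.range A) = ⊤ :=
    hA.affineSpan_eq_top_iff_card_eq_finrank_add_one.mpr (by simp)
  have hne := hA.ne_of_mem_interior_convexHull hspan hA₀
  have hstat : ∑ i, B i • u i = 0 := by
    simpa only [hu] using (IsLocalMin.sum_smul_inv_norm_smul_sub_eq_zero (.of_forall hmin) hne)
  have hnd : ∀ n, (∀ i, ⟪u i, n⟫ = 0) → n = 0 := fun n h =>
    eq_zero_of_forall_inner_sub_eq_zero_of_affineSpan_eq_top hspan A₀ fun i => by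
      simpa [hu, real_inner_smul_left, sub_eq_zero, (hne i).symm] using h i
  have hface : ∀ (r : Fin 4) (n : EuclideanSpace ℝ (Fin 3)), ‖n‖ = 1 → r ≠ 3 →
      (∀ i, i ≠ r → i ≠ 3 → ⟪u i, n⟫ = 0) → B r = |⟪u 3, n⟫| / |⟪u r, n⟫| * B 3 :=
    fun r n hn hr hother => eq_abs_inner_div_abs_inner_mul_of_sum_smul_eq_zero hstat hnd
      (norm_ne_zero_iff.mp (hn ▸ one_ne_zero)) hr (hB r).le (hB 3) hother
  have hB3 : B 3 = (c - B₀) / 2 := by linarith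
  refine ⟨hB3, ?_, ?_, ?_⟩ <;> rw [← hB3]
  · exact hface 0 n23 hn23.1 (by decide) (by intro i; fin_cases i <;> simp [hn23])
  · exact hface 1 n13 hn13.1 (by decide) (by intro i; fin_cases i <;> simp [hn13])
  · exact hface 2 n12 hn12.1 (by decide) (by intro i; fin_cases i <;> simp [hn12])

/-- Negative answer to the inverse mixed weighted Fermat–Torricelli problem for
tetrahedra: if `A₀` is interior to the tetrahedron `A₁A₂A₃A₄` and the positive weights
`B̄ᵢ` satisfy `∑ B̄ᵢ = c`, the mass-flow condition `B̄₁+B̄₂+B̄₃ = B̄₄+B̄₀`, and `A₀`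
minimizes `X ↦ ∑ B̄ᵢ‖X − Aᵢ‖`, then the weights are given by explicit formulas
depending on the residual weight `B̄₀`. Indices are shifted: `A 0, …, A 3` are
`A₁, …, A₄`. -/
theorem inverse_mixed_weighted_fermat_torricelli_tetrahedron
    (A : Fin 4 → EuclideanSpace ℝ (Fin 3))
    (hA : AffineIndependent ℝ A)
    (A₀ : EuclideanSpace ℝ (Fin 3))
    (hA₀ : A₀ ∈ interior (convexHull ℝ (Set.range A)))
    (u : Fin 4 → EuclideanSpace ℝ (Fin 3))
    (hu : ∀ i, u i = ‖A i - A₀‖⁻¹ • (A i - A₀))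
    (n23 n13 n12 : EuclideanSpace ℝ (Fin 3))
    (hn23 : ‖n23‖ = 1 ∧ ⟪u 1, n23⟫ = 0 ∧ ⟪u 2, n23⟫ = 0)
    (hn13 : ‖n13‖ = 1 ∧ ⟪u 0, n13⟫ = 0 ∧ ⟪u 2, n13⟫ = 0)
    (hn12 : ‖n12‖ = 1 ∧ ⟪u 0, n12⟫ = 0 ∧ ⟪u 1, n12⟫ = 0)
    (c B₀ : ℝ) (hc : 0 < c) (hB₀ : 0 ≤ B₀)
    (B : Fin 4 → ℝ) (hB : ∀ i, 0 < B i)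
    (hsum : B 0 + B 1 + B 2 + B 3 = c)
    (hflow : B 0 + B 1 + B 2 = B 3 + B₀)
    (hmin : ∀ X : EuclideanSpace ℝ (Fin 3),
      ∑ i, B i * ‖A₀ - A i‖ ≤ ∑ i, B i * ‖X - A i‖) :
    B 3 = (c - B₀) / 2 ∧
    B 0 = (|⟪u 3, n23⟫| / |⟪u 0, n23⟫|) * ((c - B₀) / 2) ∧
    B 1 = (|⟪u 3, n13⟫| / |⟪u 1, n13⟫|) * ((c - B₀) / 2) ∧
    B 2 = (|⟪u 3, n12⟫| / |⟪u 2, n12⟫|) * ((c - B₀) / 2) :=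
  inverse_mixed_weighted_fermat_torricelli_tetrahedron_general A hA A₀ hA₀ u hu n23 n13 n12 hn23
    hn13 hn12 c B₀ B hB hsum hflow hmin
end

section
/- Let A_1A_2A_3A_4 be a non-degenerate tetrahedron in ℝ³ with interior point A_0 such that ∠A_iA_0A_j = arccos(−1/3) for each of the five pairs (i,j) ∈ {(1,2), (1,3), (1,4), (2,3), (2,4)}. Then also ∠A_3A_0A_4 = arccos(−1/3); and if B̄_1, B̄_2, B̄_3, B̄_4 > 0 satisfy B̄_1 + B̄_2 + B̄_3 + B̄_4 = 1 and B̄_1 + B̄_2 + B̄_3 = B̄_4 + 1/2, and A_0 minimizes X ↦ Σ_{i=1}^4 B̄_i‖X − A_i‖, then B̄_1 = B̄_2 = B̄_3 = B̄_4 = 1/4. -/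
/-!
Let `u i` be the unit vector from `A₀` towards `A i`. As `A₀` lies in the convex hull of the
vertices, `∑ μ i • u i = 0` for some weights `μ` of positive total mass. Pairing this with each
`u j` gives a linear system in the `μ i` which, given the five inner products `-1/3`, implies
`μ 0 * (3 * ⟪u 2, u 3⟫ + 1) = 0`, while `μ 0 = 0` would force `∑ μ i = 0`.

At a minimizer of `X ↦ ∑ B i ‖X - A i‖` distinct from the vertices the derivative vanishes,
i.e. `∑ B i • u i = 0`. Pairing with `u j` now gives `B j - (1 - B j) / 3 = 0`, so `B j = 1/4`.
-/

open EuclideanGeometry InnerProductGeometry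
open scoped RealInnerProductSpace

variable {E : Type*} [NormedAddCommGroup E] [InnerProductSpace ℝ E]

theorem real_inner_normalize_normalize (x y : E) :
    ⟪NormedSpace.normalize x, NormedSpace.normalize y⟫ = Real.cos (angle x y) := by
  rw [cos_angle, NormedSpace.normalize, NormedSpace.normalize, real_inner_smul_left,
    real_inner_smul_right, div_eq_mul_inv, mul_inv]
  ring

theorem hasDerivAt_norm_add_smul {x : E} (hx : x ≠ 0) (v : E) :
    HasDerivAt (fun t : ℝ => ‖x + t • v‖) ⟪NormedSpace.normalize x, v⟫ 0 := by
  have hsq : HasDerivAt (fun t : ℝ => ‖x + t • v‖ ^ 2) (2 * ⟪x, v⟫) 0 := by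
    simpa using (((hasDerivAt_id (0 : ℝ)).smul_const v).const_add x).norm_sq
  convert hsq.sqrt (by simpa using hx) using 1
  · simp [Real.sqrt_sq (norm_nonneg _)]
  · rw [NormedSpace.normalize, real_inner_smul_left]
    simp only [zero_smul, add_zero, Real.sqrt_sq (norm_nonneg _)]
    field_simp

theorem sum_smul_normalize_sub_eq_zero_of_isMinOn {ι : Type*} [Fintype ι]
    {A : ι → E} {B : ι → ℝ} {x : E} (hxA : ∀ i, A i ≠ x)
    (hmin : IsMinOn (fun X => ∑ i, B i * ‖X - A i‖) Set.univ x) :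
    ∑ i, B i • NormedSpace.normalize (A i - x) = 0 := by
  set s := ∑ i, B i • NormedSpace.normalize (A i - x)
  have hderiv : HasDerivAt (fun t : ℝ => ∑ i, B i * ‖A i - x + t • s‖) ⟪s, s⟫ 0 := by
    have hss : ⟪s, s⟫ = ∑ i, B i * ⟪NormedSpace.normalize (A i - x), s⟫ := by
      rw [show ⟪s, s⟫ = ⟪∑ i, B i • NormedSpace.normalize (A i - x), s⟫ from rfl, sum_inner]
      simp only [real_inner_smul_left]
    rw [hss]
    exact HasDerivAt.fun_sum fun i _ =>
      (hasDerivAt_norm_add_smul (sub_ne_zero.2 (hxA i)) s).const_mul (B i)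
  have hloc : IsLocalMin (fun t : ℝ => ∑ i, B i * ‖A i - x + t • s‖) 0 :=
    Filter.Eventually.of_forall fun t => by
      have h : ∀ i, ‖x - t • s - A i‖ = ‖A i - x + t • s‖ := fun i => by
        rw [← norm_neg]; congr 1; abel
      simpa [h, norm_sub_rev x] using isMinOn_univ_iff.1 hmin (x - t • s)
  exact inner_self_eq_zero.1 (IsLocalMin.hasDerivAt_eq_zero hloc hderiv)

theorem exists_nonneg_sum_smul_sub_eq_zero_of_mem_convexHull {ι : Type*} [Fintype ι]
    {A : ι → E} {x : E} (hx : x ∈ convexHull ℝ (Set.range A)) :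
    ∃ w : ι → ℝ, (∀ i, 0 ≤ w i) ∧ ∑ i, w i = 1 ∧ ∑ i, w i • (A i - x) = 0 := by
  classical
  rw [convexHull_range_eq_exists_affineCombination] at hx
  obtain ⟨s, w, hw₀, hw₁, rfl⟩ := hx
  have hW₁ : ∑ i, (s : Set ι).indicator w i = 1 := by
    rw [Finset.sum_indicator_subset _ (Finset.subset_univ s), hw₁]
  refine ⟨(s : Set ι).indicator w, fun i => Set.indicator_nonneg hw₀ i, hW₁, ?_⟩
  rw [s.affineCombination_indicator_subset w A (Finset.subset_univ s),
    Finset.univ.affineCombination_eq_linear_combination _ _ hW₁]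
  simp [smul_sub, Finset.sum_sub_distrib, ← Finset.sum_smul, hW₁]

theorem exists_sum_pos_sum_smul_normalize_sub_eq_zero_of_mem_convexHull {ι : Type*}
    [Fintype ι] {A : ι → E} {x : E} (hx : x ∈ convexHull ℝ (Set.range A)) (hxA : ∀ i, A i ≠ x) :
    ∃ μ : ι → ℝ, 0 < ∑ i, μ i ∧ ∑ i, μ i • NormedSpace.normalize (A i - x) = 0 := by
  obtain ⟨w, hw₀, hw₁, hw⟩ := exists_nonneg_sum_smul_sub_eq_zero_of_mem_convexHull hx
  obtain ⟨i, -, hi⟩ := Finset.exists_ne_zero_of_sum_ne_zero (hw₁ ▸ one_ne_zero)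
  have hdist : ∀ i, 0 < ‖A i - x‖ := fun i => norm_pos_iff.2 (sub_ne_zero.2 (hxA i))
  refine ⟨fun i => w i * ‖A i - x‖, ?_, ?_⟩
  · exact Finset.sum_pos' (fun i _ => mul_nonneg (hw₀ i) (hdist i).le)
      ⟨i, Finset.mem_univ i, mul_pos ((hw₀ i).lt_of_ne' hi) (hdist i)⟩
  · simpa only [mul_smul, NormedSpace.norm_smul_normalize] using hw

theorem one_sub_mul_add_mul_sum_eq_zero {ι : Type*} [Fintype ι] {u : ι → E} {c : ℝ}
    (hu : ∀ i, ‖u i‖ = 1) (hc : ∀ i j, i ≠ j → ⟪u i, u j⟫ = c) {B : ι → ℝ}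
    (hB : ∑ i, B i • u i = 0) (j : ι) :
    (1 - c) * B j + c * ∑ i, B i = 0 := by
  classical
  have h := congrArg (⟪·, u j⟫) hB
  simp only [sum_inner, real_inner_smul_left, inner_zero_left] at h
  have hterm : ∀ i, B i * ⟪u i, u j⟫ = c * B i + if i = j then (1 - c) * B i else 0 := by
    intro i
    by_cases hij : i = j
    · subst hij
      rw [if_pos rfl, real_inner_self_eq_norm_sq, hu, one_pow]
      ring
    · simp [hij, hc i j hij, mul_comm]
  rw [← h, Finset.sum_congr rfl fun i _ => hterm i, Finset.sum_add_distrib, Finset.sum_ite_eq',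
    if_pos (Finset.mem_univ j), Finset.mul_sum]
  ring

theorem inner_two_three_eq_neg_third {u : Fin 4 → E} (hu : ∀ i, ‖u i‖ = 1)
    (h01 : ⟪u 0, u 1⟫ = -(1/3)) (h02 : ⟪u 0, u 2⟫ = -(1/3)) (h03 : ⟪u 0, u 3⟫ = -(1/3))
    (h12 : ⟪u 1, u 2⟫ = -(1/3)) (h13 : ⟪u 1, u 3⟫ = -(1/3))
    {μ : Fin 4 → ℝ} (hμ : ∑ i, μ i ≠ 0) (hrel : ∑ i, μ i • u i = 0) :
    ⟪u 2, u 3⟫ = -(1/3) := by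
  have hrel' : ∀ j, ∑ i, μ i * ⟪u i, u j⟫ = 0 := fun j => by
    simpa only [sum_inner, real_inner_smul_left, inner_zero_left] using congrArg (⟪·, u j⟫) hrel
  have hself : ∀ i, ⟪u i, u i⟫ = 1 := fun i => by
    rw [real_inner_self_eq_norm_sq, hu i, one_pow]
  have e0 := hrel' 0
  have e1 := hrel' 1
  have e2 := hrel' 2
  have e3 := hrel' 3
  simp only [Fin.sum_univ_four, hself, real_inner_comm (u 0), real_inner_comm (u 1) (u 2),
    real_inner_comm (u 1) (u 3), real_inner_comm (u 2) (u 3), h01, h02, h03, h12, h13]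
    at e0 e1 e2 e3
  set x := ⟪u 2, u 3⟫
  have key : μ 0 * (3 * x + 1) = 0 := by
    linear_combination (3/2) * (e2 + e3 + 3 * (1 + x) * e0 - (3/4) * (5/3 + x) * (e0 - e1))
  rw [Fin.sum_univ_four] at hμ
  rcases mul_eq_zero.1 key with h0 | hx
  · exact absurd (by linarith) hμ
  · linarith

theorem inner_eq_neg_third_of_ne {u : Fin 4 → E} (hu : ∀ i, ‖u i‖ = 1)
    (h01 : ⟪u 0, u 1⟫ = -(1/3)) (h02 : ⟪u 0, u 2⟫ = -(1/3)) (h03 : ⟪u 0, u 3⟫ = -(1/3))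
    (h12 : ⟪u 1, u 2⟫ = -(1/3)) (h13 : ⟪u 1, u 3⟫ = -(1/3))
    {μ : Fin 4 → ℝ} (hμ : ∑ i, μ i ≠ 0) (hrel : ∑ i, μ i • u i = 0) :
    ∀ i j, i ≠ j → ⟪u i, u j⟫ = -(1/3) := by
  have h23 := inner_two_three_eq_neg_third hu h01 h02 h03 h12 h13 hμ hrel
  intro i j hij
  fin_cases i <;> fin_cases j <;> first
    | exact absurd rfl hij | assumption | (rw [real_inner_comm]; assumption)

theorem mixed_inverse_regular_tetrahedron_general
    (A : Fin 4 → EuclideanSpace ℝ (Fin 3))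
    (A₀ : EuclideanSpace ℝ (Fin 3))
    (hA₀ : A₀ ∈ interior (convexHull ℝ (Set.range A)))
    (h12 : ∠ (A 0) A₀ (A 1) = Real.arccos (-(1/3)))
    (h13 : ∠ (A 0) A₀ (A 2) = Real.arccos (-(1/3)))
    (h14 : ∠ (A 0) A₀ (A 3) = Real.arccos (-(1/3)))
    (h23 : ∠ (A 1) A₀ (A 2) = Real.arccos (-(1/3)))
    (h24 : ∠ (A 1) A₀ (A 3) = Real.arccos (-(1/3))) :
    ∠ (A 2) A₀ (A 3) = Real.arccos (-(1/3)) ∧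
    ∀ B : Fin 4 → ℝ, (∀ i, 0 < B i) →
      B 0 + B 1 + B 2 + B 3 = 1 →
      B 0 + B 1 + B 2 = B 3 + 1/2 →
      (∀ X : EuclideanSpace ℝ (Fin 3),
        ∑ i, B i * ‖A₀ - A i‖ ≤ ∑ i, B i * ‖X - A i‖) →
      ∀ i, B i = 1/4 := by
  set u := fun i => NormedSpace.normalize (A i - A₀)
  have hcos : ∀ i j, ⟪u i, u j⟫ = Real.cos (∠ (A i) A₀ (A j)) := fun i j =>
    real_inner_normalize_normalize _ _
  have hinner : ∀ {i j}, ∠ (A i) A₀ (A j) = Real.arccos (-(1/3)) → ⟪u i, u j⟫ = -(1/3) :=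
    fun h => by rw [hcos, h, Real.cos_arccos (by norm_num) (by norm_num)]
  have hne : ∀ {i j}, ∠ (A i) A₀ (A j) = Real.arccos (-(1/3)) → A i ≠ A₀ ∧ A j ≠ A₀ := by
    intro i j h
    constructor <;> rintro he <;> simpa [u, he] using hinner h
  have hA : ∀ i, A i ≠ A₀ := by
    intro i
    fin_cases i
    exacts [(hne h12).1, (hne h12).2, (hne h13).2, (hne h14).2]
  have hu : ∀ i, ‖u i‖ = 1 := fun i => NormedSpace.norm_normalize (sub_ne_zero.2 (hA i))
  obtain ⟨μ, hμ, hrel⟩ :=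
    exists_sum_pos_sum_smul_normalize_sub_eq_zero_of_mem_convexHull (interior_subset hA₀) hA
  have hgram := inner_eq_neg_third_of_ne hu (hinner h12) (hinner h13) (hinner h14) (hinner h23)
    (hinner h24) hμ.ne' hrel
  refine ⟨?_, fun B _ hB₁ _ hmin i => ?_⟩
  · rw [← hgram 2 3 (by decide), hcos, Real.arccos_cos (angle_nonneg _ _ _) (angle_le_pi _ _ _)]
  · have h := one_sub_mul_add_mul_sum_eq_zero hu hgram
      (sum_smul_normalize_sub_eq_zero_of_isMinOn hA (isMinOn_univ_iff.2 hmin)) i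
    rw [Fin.sum_univ_four, hB₁] at h
    linarith

/-- For a tetrahedron `A₁A₂A₃A₄` with interior point `A₀` at which five of the six
angles `∠AᵢA₀Aⱼ` equal `arccos(−1/3)`, the sixth angle `∠A₃A₀A₄` also equals
`arccos(−1/3)`; and if positive weights satisfy `∑ B̄ᵢ = 1`,
`B̄₁+B̄₂+B̄₃ = B̄₄ + 1/2` and `A₀` minimizes `X ↦ ∑ B̄ᵢ‖X − Aᵢ‖`, then all the
weights equal `1/4`. Indices are shifted: `A 0, …, A 3` are `A₁, …, A₄`. -/
theorem mixed_inverse_regular_tetrahedron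
    (A : Fin 4 → EuclideanSpace ℝ (Fin 3))
    (hA : AffineIndependent ℝ A)
    (A₀ : EuclideanSpace ℝ (Fin 3))
    (hA₀ : A₀ ∈ interior (convexHull ℝ (Set.range A)))
    (h12 : ∠ (A 0) A₀ (A 1) = Real.arccos (-(1/3)))
    (h13 : ∠ (A 0) A₀ (A 2) = Real.arccos (-(1/3)))
    (h14 : ∠ (A 0) A₀ (A 3) = Real.arccos (-(1/3)))
    (h23 : ∠ (A 1) A₀ (A 2) = Real.arccos (-(1/3)))
    (h24 : ∠ (A 1) A₀ (A 3) = Real.arccos (-(1/3))) :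
    ∠ (A 2) A₀ (A 3) = Real.arccos (-(1/3)) ∧
    ∀ B : Fin 4 → ℝ, (∀ i, 0 < B i) →
      B 0 + B 1 + B 2 + B 3 = 1 →
      B 0 + B 1 + B 2 = B 3 + 1/2 →
      (∀ X : EuclideanSpace ℝ (Fin 3),
        ∑ i, B i * ‖A₀ - A i‖ ≤ ∑ i, B i * ‖X - A i‖) →
      ∀ i, B i = 1/4 :=
  mixed_inverse_regular_tetrahedron_general A A₀ hA₀ h12 h13 h14 h23 h24
end

section
/- (Inverse weighted Fermat–Torricelli problem for tetrahedra.) Let A_1A_2A_3A_4 be a non-degenerate tetrahedron in ℝ³, let A_0 be a point in its interior, and let c > 0. Then there exists a unique quadruple of positive weights (B̄_1, B̄_2, B̄_3, B̄_4) with B̄_1 + B̄_2 + B̄_3 + B̄_4 = c such that A_0 minimizes X ↦ Σ_{i=1}^4 B̄_i‖X − A_i‖, and it is given by B̄_i = c / (1 + s_{i,jk}/s_{l,jk} + s_{i,jl}/s_{k,jl} + s_{i,kl}/s_{j,kl}) for {i,j,k,l} = {1,2,3,4}, where u_r = u(A_0, A_r), n_{pq} is a unit normal to span{u_p, u_q},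 and s_{r,pq} := |⟨u_r, n_{pq}⟩|. -/
/-!
Each `X ↦ ‖X - A i‖` is convex, and differentiable away from `A i` with gradient the unit
vector from `A i` to `X`. Hence, for positive weights, `A₀` minimizes `∑ B i ‖X - A i‖` exactly
when the unit vectors `u i` from `A₀` to the vertices balance: `∑ B i • u i = 0`. Writing
`A₀ = ∑ t i • A i` in barycentric coordinates (all positive since `A₀` is interior), affine
independence forces every balanced weight vector to be proportional to `t i * ‖A i - A₀‖`, and
the constraint `∑ B i = c` fixes the factor. Pairing the balance equation with `n j k`, which is
orthogonal to `u j` and `u k`, gives `B i s_{i,jk} = B l s_{l,jk}`, where `s_{l,jk} ≠ 0` because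
the `u i` span the space; substituting the three ratios into `∑ B i = c` gives the formula.
-/

open Finset RealInnerProductSpace

theorem AffineIndependent.eq_sum_smul_of_sum_smul_sub_eq_zero {k V ι : Type*} [Field k]
    [AddCommGroup V] [Module k V] [Fintype ι] {A : ι → V} (hA : AffineIndependent k A)
    {t w : ι → k} {P : V} (ht : ∑ i, t i = 1) (hP : ∑ i, t i • A i = P)
    (hw : ∑ i, w i • (A i - P) = 0) : w = (∑ i, w i) • t := by
  -- `w - (∑ w) • t` has total weight zero and is a linear relation among the `A i`.
  have hzero := hA.eq_zero_of_sum_eq_zero (s := univ) (w := w - (∑ i, w i) • t)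
    (by simp [sum_sub_distrib, ← mul_sum, ht])
    (by simpa [sub_smul, smul_sub, sum_sub_distrib, ← sum_smul, mul_smul, ← smul_sum, hP]
      using hw)
  funext i
  exact sub_eq_zero.mp (hzero i (mem_univ i))

theorem existsUnique_pos_sum_eq_proportional {ι : Type*} [Fintype ι] [Nonempty ι] {w : ι → ℝ}
    (hw : ∀ i, 0 < w i) {c : ℝ} (hc : 0 < c) :
    ∃! B : ι → ℝ, (∀ i, 0 < B i) ∧ ∑ i, B i = c ∧ ∃ σ : ℝ, ∀ i, B i = σ * w i := by
  have hT : 0 < ∑ i, w i := sum_pos (fun i _ => hw i) univ_nonempty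
  refine ⟨fun i => (c / ∑ j, w j) * w i,
    ⟨fun i => mul_pos (div_pos hc hT) (hw i), by rw [← mul_sum]; field_simp, _, fun _ => rfl⟩,
    ?_⟩
  rintro B ⟨-, hB, σ, hσ⟩
  have hσc : σ = c / ∑ j, w j := by
    rw [← hB]
    simp_rw [hσ]
    rw [← mul_sum]
    field_simp
  funext i
  rw [hσ, hσc]

section InnerProductSpace

variable {E ι : Type*} [NormedAddCommGroup E] [InnerProductSpace ℝ E]

-- The paper's `u(P, Q)`; note `unitVec P P = 0`, so the lemmas below need no `P ≠ Q`.
noncomputable def unitVec (P Q : E) : E := ‖Q - P‖⁻¹ • (Q - P)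

theorem inner_unitVec_sub (P Q : E) : ⟪unitVec P Q, Q - P⟫ = ‖Q - P‖ := by
  rw [unitVec, real_inner_smul_left, real_inner_self_eq_norm_sq]
  rcases eq_or_ne ‖Q - P‖ 0 with h | h
  · simp [h]
  · field_simp

theorem norm_unitVec_le (P Q : E) : ‖unitVec P Q‖ ≤ 1 := by
  rw [unitVec, norm_smul, norm_inv, norm_norm]
  exact inv_mul_le_one

theorem unitVec_swap (P Q : E) : unitVec Q P = -unitVec P Q := by
  rw [unitVec, unitVec, norm_sub_rev, ← smul_neg, neg_sub]

theorem norm_sub_le_norm_sub_add_inner_unitVec (P Q X : E) :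
    ‖P - Q‖ ≤ ‖X - Q‖ + ⟪unitVec P Q, X - P⟫ :=
  calc ‖P - Q‖ = ⟪unitVec P Q, Q - X⟫ + ⟪unitVec P Q, X - P⟫ := by
        rw [← inner_add_right, sub_add_sub_cancel, inner_unitVec_sub, norm_sub_rev]
    _ ≤ ‖X - Q‖ + ⟪unitVec P Q, X - P⟫ := by
        gcongr
        calc ⟪unitVec P Q, Q - X⟫ ≤ ‖unitVec P Q‖ * ‖Q - X‖ := real_inner_le_norm _ _
          _ ≤ ‖X - Q‖ := by
            rw [norm_sub_rev]
            exact mul_le_of_le_one_left (norm_nonneg _) (norm_unitVec_le P Q)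

theorem hasFDerivAt_norm_sub {a x : E} (h : x ≠ a) :
    HasFDerivAt (fun y => ‖y - a‖) (innerSL ℝ (unitVec a x)) x := by
  have hx : ‖x - a‖ ^ 2 ≠ 0 := by simpa [sub_eq_zero] using h
  convert ((hasFDerivAt_id x).sub_const a).norm_sq.sqrt hx using 1
  · simp [Real.sqrt_sq (norm_nonneg _)]
  · ext v
    simp only [unitVec, map_smul, map_sub, smul_apply, sub_apply, coe_innerSL_apply, smul_eq_mul,
      id_eq, Real.sqrt_sq (norm_nonneg _), ContinuousLinearMap.comp_id, nsmul_eq_mul,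
      Nat.cast_ofNat]
    field_simp

theorem sum_mul_norm_sub_le_of_sum_smul_unitVec_eq_zero [Fintype ι] {A : ι → E} {P : E}
    {B : ι → ℝ} (hB : ∀ i, 0 ≤ B i) (hbal : ∑ i, B i • unitVec P (A i) = 0) (X : E) :
    ∑ i, B i * ‖P - A i‖ ≤ ∑ i, B i * ‖X - A i‖ :=
  calc ∑ i, B i * ‖P - A i‖
      ≤ ∑ i, B i * (‖X - A i‖ + ⟪unitVec P (A i), X - P⟫) :=
        sum_le_sum fun i _ => mul_le_mul_of_nonneg_left
          (norm_sub_le_norm_sub_add_inner_unitVec _ _ _) (hB i)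
    _ = ∑ i, B i * ‖X - A i‖ + ⟪∑ i, B i • unitVec P (A i), X - P⟫ := by
        simp only [mul_add, sum_add_distrib, sum_inner, real_inner_smul_left]
    _ = ∑ i, B i * ‖X - A i‖ := by rw [hbal, inner_zero_left, add_zero]

theorem sum_smul_unitVec_eq_zero_of_isLocalMin [Fintype ι] {A : ι → E} {P : E} {B : ι → ℝ}
    (hP : ∀ i, P ≠ A i) (hmin : IsLocalMin (fun X => ∑ i, B i * ‖X - A i‖) P) :
    ∑ i, B i • unitVec P (A i) = 0 := by
  have hderiv : HasFDerivAt (fun X => ∑ i, B i * ‖X - A i‖)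
      (∑ i, B i • innerSL ℝ (unitVec (A i) P)) P :=
    HasFDerivAt.fun_sum fun i _ => (hasFDerivAt_norm_sub (hP i)).const_mul (B i)
  have hderiv_apply (v : E) :
      (∑ i, B i • innerSL ℝ (unitVec (A i) P)) v = -⟪∑ i, B i • unitVec P (A i), v⟫ := by
    simp [unitVec_swap P, sum_inner, real_inner_smul_left]
  have hS := hderiv_apply (∑ i, B i • unitVec P (A i))
  rw [hmin.hasFDerivAt_eq_zero hderiv, zero_apply, eq_comm, neg_eq_zero] at hS
  exact inner_self_eq_zero.mp hS

theorem forall_sum_mul_norm_sub_le_iff [Fintype ι] {A : ι → E} {P : E} {B : ι → ℝ}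
    (hB : ∀ i, 0 ≤ B i) (hP : ∀ i, P ≠ A i) :
    (∀ X, ∑ i, B i * ‖P - A i‖ ≤ ∑ i, B i * ‖X - A i‖) ↔ ∑ i, B i • unitVec P (A i) = 0 :=
  ⟨fun hmin => sum_smul_unitVec_eq_zero_of_isLocalMin hP (Filter.Eventually.of_forall hmin),
    sum_mul_norm_sub_le_of_sum_smul_unitVec_eq_zero hB⟩

theorem sum_smul_unitVec_eq_zero_iff [Fintype ι] {A : ι → E} {P : E} {t B : ι → ℝ}
    (hA : AffineIndependent ℝ A) (ht : ∑ i, t i = 1) (hP : ∑ i, t i • A i = P)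
    (hne : ∀ i, A i ≠ P) :
    ∑ i, B i • unitVec P (A i) = 0 ↔ ∃ σ : ℝ, ∀ i, B i = σ * (t i * ‖A i - P‖) := by
  have hr (i : ι) : ‖A i - P‖ ≠ 0 := norm_ne_zero_iff.mpr (sub_ne_zero.mpr (hne i))
  have hterm (i : ι) : B i • unitVec P (A i) = (B i / ‖A i - P‖) • (A i - P) := by
    rw [unitVec, smul_smul, div_eq_mul_inv]
  simp_rw [hterm]
  constructor
  · intro h
    refine ⟨∑ i, B i / ‖A i - P‖, fun i => ?_⟩
    have hi := congrFun (hA.eq_sum_smul_of_sum_smul_sub_eq_zero ht hP h) i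
    rw [Pi.smul_apply, smul_eq_mul, div_eq_iff (hr i)] at hi
    rw [hi]
    ring
  · rintro ⟨σ, hσ⟩
    calc ∑ i, (B i / ‖A i - P‖) • (A i - P) = σ • ∑ i, t i • (A i - P) := by
          rw [smul_sum]
          refine sum_congr rfl fun i _ => ?_
          rw [hσ, smul_smul]
          field_simp [hr i]
      _ = 0 := by simp [smul_sub, sum_sub_distrib, ← sum_smul, ht, hP]

theorem eq_zero_of_forall_inner_unitVec_eq_zero {A : ι → E} {P v : E}
    (hA : affineSpan ℝ (Set.range A) = ⊤) (hne : ∀ i, A i ≠ P)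
    (hv : ∀ i, ⟪unitVec P (A i), v⟫ = 0) : v = 0 := by
  have horth (i : ι) : ⟪v, A i - P⟫ = 0 := by
    have h := hv i
    rw [unitVec, real_inner_smul_left, mul_eq_zero] at h
    simpa [real_inner_comm, sub_eq_zero, hne i] using h
  have hspan : vectorSpan ℝ (Set.range A) ≤ LinearMap.ker (innerₛₗ ℝ v) := by
    rw [vectorSpan_def, Submodule.span_le]
    rintro _ ⟨_, ⟨i, rfl⟩, _, ⟨j, rfl⟩, rfl⟩
    simp only [SetLike.mem_coe, LinearMap.mem_ker, innerₛₗ_apply_apply, vsub_eq_sub]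
    rw [← sub_sub_sub_cancel_right _ _ P, inner_sub_right, horth i, horth j, sub_zero]
  rw [← direction_affineSpan, hA, AffineSubspace.direction_top] at hspan
  simpa using hspan (Submodule.mem_top (x := v))

theorem abs_inner_div_abs_inner_eq_div [Fintype ι] {u : ι → E} {B : ι → ℝ}
    (hbal : ∑ m, B m • u m = 0) (hspan : ∀ v, (∀ m, ⟪u m, v⟫ = 0) → v = 0)
    {x y : ι} (hxy : x ≠ y) (hBx : 0 < B x) (hBy : 0 < B y) {n : E} (hn : n ≠ 0)
    (hperp : ∀ m, m ≠ x → m ≠ y → ⟪u m, n⟫ = 0) :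
    |⟪u x, n⟫| / |⟪u y, n⟫| = B y / B x := by
  have hxy_sum : B x * ⟪u x, n⟫ + B y * ⟪u y, n⟫ = 0 := by
    have h := congrArg (⟪·, n⟫) hbal
    simp only [sum_inner, real_inner_smul_left, inner_zero_left] at h
    rwa [Fintype.sum_eq_add x y hxy fun m hm => by rw [hperp m hm.1 hm.2, mul_zero]] at h
  have hy : ⟪u y, n⟫ ≠ 0 := by
    intro hy
    refine hn (hspan n fun m => ?_)
    by_cases hmx : m = x
    · subst hmx
      simpa [hy, hBx.ne'] using hxy_sum
    by_cases hmy : m = y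
    · exact hmy ▸ hy
    exact hperp m hmx hmy
  have habs : B x * |⟪u x, n⟫| = B y * |⟪u y, n⟫| := by
    calc B x * |⟪u x, n⟫| = |B x * ⟪u x, n⟫| := by rw [abs_mul, abs_of_pos hBx]
      _ = |B y * ⟪u y, n⟫| := by rw [eq_neg_of_add_eq_zero_left hxy_sum, abs_neg]
      _ = B y * |⟪u y, n⟫| := by rw [abs_mul, abs_of_pos hBy]
  rw [div_eq_div_iff (abs_ne_zero.mpr hy) hBx.ne']
  linear_combination habs

theorem weight_eq_div_one_add_abs_inner_div {u : Fin 4 → E} {n : Fin 4 → Fin 4 → E}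
    {B : Fin 4 → ℝ} {c : ℝ} (hspan : ∀ v, (∀ m, ⟪u m, v⟫ = 0) → v = 0)
    (hn : ∀ p q, ‖n p q‖ = 1 ∧ ⟪u p, n p q⟫ = 0 ∧ ⟪u q, n p q⟫ = 0)
    (hB : ∀ i, 0 < B i) (hsum : ∑ i, B i = c) (hbal : ∑ i, B i • u i = 0)
    {i j k l : Fin 4} (hij : i ≠ j) (hik : i ≠ k) (hil : i ≠ l) (hjk : j ≠ k) (hjl : j ≠ l)
    (hkl : k ≠ l) :
    B i = c / (1 + |⟪u i, n j k⟫| / |⟪u l, n j k⟫|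
      + |⟪u i, n j l⟫| / |⟪u k, n j l⟫|
      + |⟪u i, n k l⟫| / |⟪u j, n k l⟫|) := by
  have hratio (p q x y : Fin 4) (hxy : x ≠ y) (hxp : x ≠ p) (hxq : x ≠ q) (hyp : y ≠ p)
      (hyq : y ≠ q) (hpq : p ≠ q) : |⟪u x, n p q⟫| / |⟪u y, n p q⟫| = B y / B x := by
    refine abs_inner_div_abs_inner_eq_div hbal hspan hxy (hB x) (hB y)
      (norm_ne_zero_iff.mp (by rw [(hn p q).1]; exact one_ne_zero)) fun m hmx hmy => ?_
    obtain rfl | rfl : m = p ∨ m = q := by omega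
    exacts [(hn m q).2.1, (hn p m).2.2]
  rw [hratio j k i l hil hij hik hjl.symm hkl.symm hjk,
    hratio j l i k hik hij hil hjk.symm hkl hjl, hratio k l i j hij hik hil hjk hjl hkl]
  have huniv : (univ : Finset (Fin 4)) = {i, j, k, l} := by
    ext m
    simp only [mem_univ, mem_insert, mem_singleton, true_iff]
    omega
  rw [huniv, sum_insert (by simp [hij, hik, hil]), sum_insert (by simp [hjk, hjl]),
    sum_insert (by simp [hkl]), sum_singleton] at hsum
  have hc : c ≠ 0 := by linarith [hB i, hB j, hB k, hB l]
  have hBi := (hB i).ne'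
  rw [show 1 + B l / B i + B k / B i + B j / B i = c / B i by field_simp; linarith,
    div_div_cancel₀ hc]

end InnerProductSpace

/-- Inverse weighted Fermat–Torricelli problem for tetrahedra: for an interior point
`A₀` of a non-degenerate tetrahedron and `c > 0` there is a unique quadruple of
positive weights summing to `c` for which `A₀` is the weighted Fermat–Torricelli
point, and it is given by the explicit formula in terms of the quantities
`s_{r,pq} = |⟪u r, n p q⟫|`. Indices are shifted: `A 0, …, A 3` are `A₁, …, A₄`. -/
theorem inverse_weighted_fermat_torricelli_tetrahedron
    (A : Fin 4 → EuclideanSpace ℝ (Fin 3))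
    (hA : AffineIndependent ℝ A)
    (A₀ : EuclideanSpace ℝ (Fin 3))
    (hA₀ : A₀ ∈ interior (convexHull ℝ (Set.range A)))
    (c : ℝ) (hc : 0 < c)
    (u : Fin 4 → EuclideanSpace ℝ (Fin 3))
    (hu : ∀ i, u i = ‖A i - A₀‖⁻¹ • (A i - A₀))
    (n : Fin 4 → Fin 4 → EuclideanSpace ℝ (Fin 3))
    (hn : ∀ p q, ‖n p q‖ = 1 ∧ ⟪u p, n p q⟫ = 0 ∧ ⟪u q, n p q⟫ = 0) :
    (∃! B : Fin 4 → ℝ, (∀ i, 0 < B i) ∧ (∑ i, B i = c) ∧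
        ∀ X : EuclideanSpace ℝ (Fin 3),
          ∑ i, B i * ‖A₀ - A i‖ ≤ ∑ i, B i * ‖X - A i‖) ∧
    ∀ B : Fin 4 → ℝ, (∀ i, 0 < B i) → (∑ i, B i = c) →
      (∀ X : EuclideanSpace ℝ (Fin 3),
        ∑ i, B i * ‖A₀ - A i‖ ≤ ∑ i, B i * ‖X - A i‖) →
      ∀ i j k l : Fin 4,
        i ≠ j → i ≠ k → i ≠ l → j ≠ k → j ≠ l → k ≠ l →
        B i = c / (1 + |⟪u i, n j k⟫| / |⟪u l, n j k⟫|
          + |⟪u i, n j l⟫| / |⟪u k, n j l⟫|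
          + |⟪u i, n k l⟫| / |⟪u j, n k l⟫|) := by
  obtain rfl : u = fun i => unitVec A₀ (A i) := funext hu
  have htop : affineSpan ℝ (Set.range A) = ⊤ :=
    hA.affineSpan_eq_top_iff_card_eq_finrank_add_one.mpr (by simp)
  let b : AffineBasis (Fin 4) ℝ (EuclideanSpace ℝ (Fin 3)) := ⟨A, hA, htop⟩
  have hcoord : ∀ i, 0 < b.coord i A₀ := by
    change A₀ ∈ interior (convexHull ℝ (Set.range b)) at hA₀
    rwa [b.interior_convexHull] at hA₀
  have hne (i : Fin 4) : A i ≠ A₀ := fun h => by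
    obtain ⟨j, hji⟩ := exists_ne i
    exact (h ▸ hcoord j).ne' (b.coord_apply_ne hji)
  have hmin_iff (B : Fin 4 → ℝ) (hB : ∀ i, 0 < B i) :
      (∀ X, ∑ i, B i * ‖A₀ - A i‖ ≤ ∑ i, B i * ‖X - A i‖) ↔
        ∑ i, B i • unitVec A₀ (A i) = 0 :=
    forall_sum_mul_norm_sub_le_iff (fun i => (hB i).le) fun i => (hne i).symm
  refine ⟨?_, fun B hB hsum hmin i j k l => ?_⟩
  · rw [existsUnique_congr fun B => and_congr_right fun hB => and_congr_right fun _ =>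
      (hmin_iff B hB).trans (sum_smul_unitVec_eq_zero_iff hA (b.sum_coord_apply_eq_one A₀)
        (b.linear_combination_coord_eq_self A₀) hne)]
    exact existsUnique_pos_sum_eq_proportional
      (fun i => mul_pos (hcoord i) (norm_pos_iff.mpr (sub_ne_zero.mpr (hne i)))) hc
  · exact weight_eq_div_one_add_abs_inner_div
      (fun v hv => eq_zero_of_forall_inner_unitVec_eq_zero htop hne hv) hn hB hsum
      ((hmin_iff B hB).mp hmin)
end

section
/- (Plasticity of mixed weighted closed hexahedra.) Let A_0 be a point of ℝ³ and A_1, …, A_5 points distinct from A_0 with u_i = u(A_0, A_i); assume u_1, u_2 are linearly independent, and similarly for the pairs (u_1, u_3) and (u_2, u_3). Let B̄_1, …, B̄_5 > 0 satisfy the balance condition Σ_{i=1}^5 B̄_i u_i = 0 (so A_0 is the weighted Fermat–Torricelli point in the floating case), together with Σ_{i=1}^5 B̄_i = c and B̄_1 + B̄_2 + B̄_3 + B̄_5 = B̄_4 + B̄_0. Then B̄_4 = (c − B̄_0)/2, and with n_{pq} a unit normal to span{u_p, u_q}: whenever ⟨u_3, n_{12}⟩ ≠ 0 and ⟨u_4,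 n_{12}⟩ ≠ 0, B̄_3/B̄_4 = −(⟨u_4, n_{12}⟩/⟨u_3, n_{12}⟩)·(1 + (B̄_5/B̄_4)·(⟨u_5, n_{12}⟩/⟨u_4, n_{12}⟩)); whenever ⟨u_2, n_{13}⟩ ≠ 0 and ⟨u_4, n_{13}⟩ ≠ 0, B̄_2/B̄_4 = −(⟨u_4, n_{13}⟩/⟨u_2, n_{13}⟩)·(1 + (B̄_5/B̄_4)·(⟨u_5, n_{13}⟩/⟨u_4, n_{13}⟩)); and whenever ⟨u_1, n_{23}⟩ ≠ 0 and ⟨u_4, n_{23}⟩ ≠ 0, B̄_1/B̄_4 = −(⟨u_4, n_{23}⟩/⟨u_1, n_{23}⟩)·(1 + (B̄_5/B̄_4)·(⟨u_5, n_{23}⟩/⟨u_4, n_{23}⟩)). (Here the signed component ⟨u_r, n_{pq}⟩ equals sgn_{r,p0q}·sin α_{r,p0q} in the paper's notation.) -/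
open RealInnerProductSpace

/-!
Pairing the balance equation `∑ B̄ᵢ uᵢ = 0` with a normal `n` to `span {u_p, u_q}` kills the
terms of `u_p` and `u_q` and leaves one linear relation among the other three weights; dividing it
by `B̄₄` is the plasticity equation. The value of `B̄₄` is a linear consequence of the two weight
constraints.
-/

section
variable {ι E : Type*} [Fintype ι]
  [NormedAddCommGroup E] [InnerProductSpace ℝ E]

theorem sum_mul_inner_eq_zero_of_sum_smul_eq_zero {B : ι → ℝ} {u : ι → E}
    (hbal : ∑ i, B i • u i = 0) (n : E) : ∑ i, B i * ⟪u i, n⟫ = 0 := by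
  simpa [sum_inner, real_inner_smul_left] using congrArg (⟪·, n⟫) hbal

theorem div_eq_of_sum_smul_eq_zero_of_inner_eq_zero [DecidableEq ι] {B : ι → ℝ} {u : ι → E}
    (hbal : ∑ i, B i • u i = 0) {n : E} {r s t : ι}
    (hrs : r ≠ s) (hrt : r ≠ t) (hst : s ≠ t)
    (horth : ∀ i, i ≠ r → i ≠ s → i ≠ t → ⟪u i, n⟫ = 0)
    (hr : ⟪u r, n⟫ ≠ 0) (hs : ⟪u s, n⟫ ≠ 0) (hBs : B s ≠ 0) :
    B r / B s = -(⟪u s, n⟫ / ⟪u r, n⟫) * (1 + (B t / B s) * (⟪u t, n⟫ / ⟪u s, n⟫)) := by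
  have hoff : ∀ i ∈ Finset.univ, i ∉ ({r, s, t} : Finset ι) → B i * ⟪u i, n⟫ = 0 := by
    intro i _ hi
    simp only [Finset.mem_insert, Finset.mem_singleton, not_or] at hi
    rw [horth i hi.1 hi.2.1 hi.2.2, mul_zero]
  have h := sum_mul_inner_eq_zero_of_sum_smul_eq_zero hbal n
  rw [← Finset.sum_subset (Finset.subset_univ _) hoff, Finset.sum_insert (by simp [hrs, hrt]),
    Finset.sum_pair hst] at h
  field_simp
  linear_combination h
end

theorem plasticity_mixed_weighted_closed_hexahedron_general
    (u : Fin 5 → EuclideanSpace ℝ (Fin 3))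
    (B : Fin 5 → ℝ) (hB : ∀ i, 0 < B i)
    (hbal : ∑ i, B i • u i = 0)
    (c B₀ : ℝ)
    (hsum : ∑ i, B i = c)
    (hflow : B 0 + B 1 + B 2 + B 4 = B 3 + B₀)
    (n12 n13 n23 : EuclideanSpace ℝ (Fin 3))
    (hn12 : ‖n12‖ = 1 ∧ ⟪u 0, n12⟫ = 0 ∧ ⟪u 1, n12⟫ = 0)
    (hn13 : ‖n13‖ = 1 ∧ ⟪u 0, n13⟫ = 0 ∧ ⟪u 2, n13⟫ = 0)
    (hn23 : ‖n23‖ = 1 ∧ ⟪u 1, n23⟫ = 0 ∧ ⟪u 2, n23⟫ = 0) :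
    B 3 = (c - B₀) / 2 ∧
    (⟪u 2, n12⟫ ≠ 0 → ⟪u 3, n12⟫ ≠ 0 →
      B 2 / B 3 = -(⟪u 3, n12⟫ / ⟪u 2, n12⟫)
        * (1 + (B 4 / B 3) * (⟪u 4, n12⟫ / ⟪u 3, n12⟫))) ∧
    (⟪u 1, n13⟫ ≠ 0 → ⟪u 3, n13⟫ ≠ 0 →
      B 1 / B 3 = -(⟪u 3, n13⟫ / ⟪u 1, n13⟫)
        * (1 + (B 4 / B 3) * (⟪u 4, n13⟫ / ⟪u 3, n13⟫))) ∧
    (⟪u 0, n23⟫ ≠ 0 → ⟪u 3, n23⟫ ≠ 0 →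
      B 0 / B 3 = -(⟪u 3, n23⟫ / ⟪u 0, n23⟫)
        * (1 + (B 4 / B 3) * (⟪u 4, n23⟫ / ⟪u 3, n23⟫))) := by
  refine ⟨by rw [Fin.sum_univ_five] at hsum; linarith, ?_, ?_, ?_⟩
  all_goals
    intro hr hs
    refine div_eq_of_sum_smul_eq_zero_of_inner_eq_zero hbal (by decide) (by decide) (by decide)
      (fun i => ?_) hr hs (hB 3).ne'
    fin_cases i <;> simp_all

/-- Plasticity of mixed weighted closed hexahedra: under the balance condition
`∑ B̄ᵢ uᵢ = 0` at `A₀`, with `∑ B̄ᵢ = c` and `B̄₁+B̄₂+B̄₃+B̄₅ = B̄₄+B̄₀`, one has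
`B̄₄ = (c − B̄₀)/2` and the three plasticity equations expressing `B̄₃/B̄₄`,
`B̄₂/B̄₄`, `B̄₁/B̄₄` through signed normal components. Indices are shifted:
`A 0, …, A 4` are `A₁, …, A₅`. -/
theorem plasticity_mixed_weighted_closed_hexahedron
    (A : Fin 5 → EuclideanSpace ℝ (Fin 3))
    (A₀ : EuclideanSpace ℝ (Fin 3))
    (hne : ∀ i, A i ≠ A₀)
    (u : Fin 5 → EuclideanSpace ℝ (Fin 3))
    (hu : ∀ i, u i = ‖A i - A₀‖⁻¹ • (A i - A₀))
    (hind12 : LinearIndependent ℝ ![u 0, u 1])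
    (hind13 : LinearIndependent ℝ ![u 0, u 2])
    (hind23 : LinearIndependent ℝ ![u 1, u 2])
    (B : Fin 5 → ℝ) (hB : ∀ i, 0 < B i)
    (hbal : ∑ i, B i • u i = 0)
    (c B₀ : ℝ)
    (hsum : ∑ i, B i = c)
    (hflow : B 0 + B 1 + B 2 + B 4 = B 3 + B₀)
    (n12 n13 n23 : EuclideanSpace ℝ (Fin 3))
    (hn12 : ‖n12‖ = 1 ∧ ⟪u 0, n12⟫ = 0 ∧ ⟪u 1, n12⟫ = 0)
    (hn13 : ‖n13‖ = 1 ∧ ⟪u 0, n13⟫ = 0 ∧ ⟪u 2, n13⟫ = 0)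
    (hn23 : ‖n23‖ = 1 ∧ ⟪u 1, n23⟫ = 0 ∧ ⟪u 2, n23⟫ = 0) :
    B 3 = (c - B₀) / 2 ∧
    (⟪u 2, n12⟫ ≠ 0 → ⟪u 3, n12⟫ ≠ 0 →
      B 2 / B 3 = -(⟪u 3, n12⟫ / ⟪u 2, n12⟫)
        * (1 + (B 4 / B 3) * (⟪u 4, n12⟫ / ⟪u 3, n12⟫))) ∧
    (⟪u 1, n13⟫ ≠ 0 → ⟪u 3, n13⟫ ≠ 0 →
      B 1 / B 3 = -(⟪u 3, n13⟫ / ⟪u 1, n13⟫)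
        * (1 + (B 4 / B 3) * (⟪u 4, n13⟫ / ⟪u 3, n13⟫))) ∧
    (⟪u 0, n23⟫ ≠ 0 → ⟪u 3, n23⟫ ≠ 0 →
      B 0 / B 3 = -(⟪u 3, n23⟫ / ⟪u 0, n23⟫)
        * (1 + (B 4 / B 3) * (⟪u 4, n23⟫ / ⟪u 3, n23⟫))) :=
  plasticity_mixed_weighted_closed_hexahedron_general u B hB hbal c B₀ hsum hflow n12 n13 n23 hn12
    hn13 hn23
end

section
/- Let A_1A_2A_3 be a non-degenerate triangle in ℝ² and let B̄_1, B̄_2, B̄_3 > 0 satisfy the absorbed-case condition ‖B̄_1 u(A_3, A_1) + B̄_2 u(A_3, A_2)‖ ≤ B̄_3. Then A_3 minimizes X ↦ B̄_1‖X − A_1‖ + B̄_2‖X − A_2‖ + B̄_3‖X − A_3‖, and moreover for every B̄_0 ≥ 0 the point A_3 also minimizes the functional with the weight B̄_3 replaced by B̄_3 + B̄_0. Consequently, the weights making the given point A_3 the weighted Fermat–Torricelli point are not unique: the solution of the inverse mixed weighted Fermat–Torricelli problem in the weighted absorbed case is not unique. -/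
open RealInnerProductSpace

lemma absorbed_key {E : Type*} [NormedAddCommGroup E] [InnerProductSpace ℝ E]
    (a b y : E) (B0 B1 c : ℝ) (hB0 : 0 ≤ B0) (hB1 : 0 ≤ B1)
    (ha : a ≠ 0) (hb : b ≠ 0)
    (habs : ‖B0 • (‖a‖⁻¹ • a) + B1 • (‖b‖⁻¹ • b)‖ ≤ c) :
    B0 * ‖a‖ + B1 * ‖b‖ ≤ B0 * ‖y - a‖ + B1 * ‖y - b‖ + c * ‖y‖ := by
  set u := ‖a‖⁻¹ • a with hu
  set v := ‖b‖⁻¹ • b with hv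
  clear_value u v
  have hna : (0:ℝ) < ‖a‖ := norm_pos_iff.mpr ha
  have hnb : (0:ℝ) < ‖b‖ := norm_pos_iff.mpr hb
  have hnu : ‖u‖ = 1 := by
    rw [hu, norm_smul, norm_inv, norm_norm, inv_mul_cancel₀ hna.ne']
  have hnv : ‖v‖ = 1 := by
    rw [hv, norm_smul, norm_inv, norm_norm, inv_mul_cancel₀ hnb.ne']
  have hua : ⟪u, a⟫ = ‖a‖ := by
    rw [hu, real_inner_smul_left, real_inner_self_eq_norm_sq]
    field_simp
  have hvb : ⟪v, b⟫ = ‖b‖ := by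
    rw [hv, real_inner_smul_left, real_inner_self_eq_norm_sq]
    field_simp
  have h1 : ‖a‖ - ⟪u, y⟫ ≤ ‖y - a‖ := by
    have := real_inner_le_norm u (a - y)
    rw [inner_sub_right, hua, hnu, one_mul, norm_sub_rev] at this
    linarith
  have h2 : ‖b‖ - ⟪v, y⟫ ≤ ‖y - b‖ := by
    have := real_inner_le_norm v (b - y)
    rw [inner_sub_right, hvb, hnv, one_mul, norm_sub_rev] at this
    linarith
  have h3 : B0 * ⟪u, y⟫ + B1 * ⟪v, y⟫ ≤ c * ‖y‖ := by
    have hh := abs_real_inner_le_norm (B0 • u + B1 • v) y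
    have : ‖B0 • u + B1 • v‖ * ‖y‖ ≤ c * ‖y‖ :=
      mul_le_mul_of_nonneg_right habs (norm_nonneg y)
    rw [inner_add_left, real_inner_smul_left, real_inner_smul_left] at hh
    have habs' := abs_le.mp hh
    linarith [habs'.2]
  have g1 : B0 * (‖a‖ - ⟪u, y⟫) ≤ B0 * ‖y - a‖ := mul_le_mul_of_nonneg_left h1 hB0
  have g2 : B1 * (‖b‖ - ⟪v, y⟫) ≤ B1 * ‖y - b‖ := mul_le_mul_of_nonneg_left h2 hB1
  nlinarith [g1, g2, h3]

/-- Weighted absorbed case for a triangle: if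
`‖B̄₁ u(A₃,A₁) + B̄₂ u(A₃,A₂)‖ ≤ B̄₃`, then `A₃` minimizes
`X ↦ B̄₁‖X−A₁‖ + B̄₂‖X−A₂‖ + B̄₃‖X−A₃‖`, and it still minimizes after the weight
`B̄₃` is replaced by `B̄₃ + B̄₀` for any `B̄₀ ≥ 0`; hence the solution of the inverse
mixed weighted Fermat–Torricelli problem in the absorbed case is not unique.
Indices are shifted: `A 0, A 1, A 2` are `A₁, A₂, A₃`. -/
theorem absorbed_case_inverse_not_unique
    (A : Fin 3 → EuclideanSpace ℝ (Fin 2))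
    (hA : AffineIndependent ℝ A)
    (B : Fin 3 → ℝ) (hB : ∀ i, 0 < B i)
    (habs : ‖B 0 • (‖A 0 - A 2‖⁻¹ • (A 0 - A 2))
        + B 1 • (‖A 1 - A 2‖⁻¹ • (A 1 - A 2))‖ ≤ B 2) :
    (∀ X : EuclideanSpace ℝ (Fin 2),
        B 0 * ‖A 2 - A 0‖ + B 1 * ‖A 2 - A 1‖ + B 2 * ‖A 2 - A 2‖
          ≤ B 0 * ‖X - A 0‖ + B 1 * ‖X - A 1‖ + B 2 * ‖X - A 2‖) ∧
    ∀ B₀ : ℝ, 0 ≤ B₀ →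
      ∀ X : EuclideanSpace ℝ (Fin 2),
        B 0 * ‖A 2 - A 0‖ + B 1 * ‖A 2 - A 1‖ + (B 2 + B₀) * ‖A 2 - A 2‖
          ≤ B 0 * ‖X - A 0‖ + B 1 * ‖X - A 1‖ + (B 2 + B₀) * ‖X - A 2‖ := by
  have hinj := hA.injective
  have ha : A 0 - A 2 ≠ 0 := sub_ne_zero.mpr (fun h => by simpa using hinj h)
  have hb : A 1 - A 2 ≠ 0 := sub_ne_zero.mpr (fun h => by simpa using hinj h)
  have key : ∀ c : ℝ, ‖B 0 • (‖A 0 - A 2‖⁻¹ • (A 0 - A 2))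
        + B 1 • (‖A 1 - A 2‖⁻¹ • (A 1 - A 2))‖ ≤ c →
      ∀ X : EuclideanSpace ℝ (Fin 2),
        B 0 * ‖A 2 - A 0‖ + B 1 * ‖A 2 - A 1‖ + c * ‖A 2 - A 2‖
          ≤ B 0 * ‖X - A 0‖ + B 1 * ‖X - A 1‖ + c * ‖X - A 2‖ := by
    intro c hc X
    have h := absorbed_key (A 0 - A 2) (A 1 - A 2) (X - A 2) (B 0) (B 1) c
      (hB 0).le (hB 1).le ha hb hc
    have e0 : X - A 2 - (A 0 - A 2) = X - A 0 := by abel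
    have e1 : X - A 2 - (A 1 - A 2) = X - A 1 := by abel
    rw [e0, e1] at h
    rw [norm_sub_rev (A 2) (A 0), norm_sub_rev (A 2) (A 1)]
    simpa using h
  exact ⟨key (B 2) habs, fun B₀ hB₀ => key (B 2 + B₀) (habs.trans (by linarith))⟩
end

section
/- (Mixed dynamic plasticity of convex quadrilaterals.) Let A_1A_2A_3A_4 be a convex quadrilateral in ℝ² with vertices listed in cyclic (say counterclockwise) order, and let A_0 be an interior point of the quadrilateral that also lies in the interior of triangle A_1A_2A_3. Suppose B_1, B_2, B_3, B_4 > 0 satisfy the balance condition Σ_{i=1}^4 B_i u(A_0, A_i) = 0 (so A_0 is the weighted Fermat–Torricelli point in the floating case), together with B_1 + B_2 + B_3 + B_4 = c and B_1 + B_2 + B_3 = B_4 + B_0. Then B_4 = (c − B_0)/2 and the plasticity relations hold: B_2 · sin∠A_2A_0A_3 = B_1 · sin∠A_1A_0A_3 + B_4 · sin∠A_3A_0A_4, and B_3 · sin∠A_2A_0A_3 = B_1 · sin∠A_1A_0A_2 + B_4 · sin(∠A_1A_0A_2 + ∠A_1A_0A_4). In particular the ratios B_2/B_1 and B_3/B_1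 are determined by the ratio B_4/B_1 together with the angles at A_0. -/
/-!
Fix an orientation of the plane and write `uᵢ` for the unit vector from `A₀` towards `Aᵢ`.
Applying the area form `ω(uⱼ, ·)` to the balance condition `∑ Bᵢ uᵢ = 0` gives
`∑ᵢ Bᵢ sin θⱼᵢ = 0`, where `θⱼᵢ` is the oriented angle from `uⱼ` to `uᵢ`; the two plasticity
relations are these identities for `j = 3` and `j = 2`. It remains to express the oriented angles
through the unoriented ones. Each consecutive oriented angle is `±∠`, and the signed angles add up
to `0` modulo `2π`. Besides the sign pattern in which all four agree, the angle conditions only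
allow two patterns, and in both of them all the `uᵢ` lie in a closed half-plane bounded by the
line through `u₂` or `u₄`, which balance with positive weights forbids.
-/

open Real InnerProductGeometry

theorem Real.Angle.eq_zero_of_coe_eq_zero {x : ℝ} (h : (x : Real.Angle) = 0)
    (h₁ : -(2 * π) < x) (h₂ : x < 2 * π) : x = 0 := by
  obtain ⟨n, rfl⟩ := Real.Angle.coe_eq_zero_iff.1 h
  rw [zsmul_eq_mul] at h₁ h₂ ⊢
  have hπ := two_pi_pos
  have hn₁ : -1 < n := by exact_mod_cast (show (-1 : ℝ) < n by nlinarith)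
  have hn₂ : n < 1 := by exact_mod_cast (show (n : ℝ) < 1 by nlinarith)
  simp [show n = 0 by omega]

-- Unless `x₂ = a₂` and `x₃ = a₃`, the signed sum lies in `(-2π, 2π)`, hence vanishes.
theorem signs_of_coe_sum_eq_zero {a₁ a₂ a₃ a₄ x₂ x₃ x₄ : ℝ}
    (h₁ : 0 < a₁ ∧ a₁ < π) (h₂ : 0 < a₂ ∧ a₂ < π) (h₃ : 0 < a₃ ∧ a₃ < π) (h₄ : 0 ≤ a₄)
    (hsum : a₁ + a₂ + a₃ + a₄ = 2 * π) (htri : π < a₁ + a₂)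
    (hx₂ : x₂ = a₂ ∨ x₂ = -a₂) (hx₃ : x₃ = a₃ ∨ x₃ = -a₃) (hx₄ : x₄ = a₄ ∨ x₄ = -a₄)
    (h : ((a₁ + x₂ + x₃ + x₄ : ℝ) : Real.Angle) = 0) :
    x₂ = a₂ ∧ x₃ = a₃ ∨ x₂ = -a₂ ∧ x₃ = a₃ ∧ a₁ + a₃ = π ∨
      x₂ = -a₂ ∧ x₃ = -a₃ ∧ a₂ + a₃ = π := by
  rcases hx₂ with rfl | rfl <;> rcases hx₃ with rfl | rfl
  · exact .inl ⟨rfl, rfl⟩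
  all_goals
    have hs := Real.Angle.eq_zero_of_coe_eq_zero h (by rcases hx₄ with rfl | rfl <;> linarith)
      (by rcases hx₄ with rfl | rfl <;> linarith)
    rcases hx₄ with rfl | rfl
  all_goals first
    | (exfalso; linarith)
    | exact .inr (.inl ⟨rfl, rfl, by linarith⟩)
    | exact .inr (.inr ⟨rfl, rfl, by linarith⟩)

namespace Orientation

variable {E : Type*} [NormedAddCommGroup E] [InnerProductSpace ℝ E]
  [Fact (Module.finrank ℝ E = 2)] (o : Orientation ℝ E (Fin 2))

theorem areaForm_eq_norm_mul_norm_mul_sin_oangle (x y : E) :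
    o.areaForm x y = ‖x‖ * ‖y‖ * Real.Angle.sin (o.oangle x y) := by
  have him : (o.kahler x y).im = o.areaForm x y := by
    simp [kahler_apply_apply, Complex.real_smul]
  rw [oangle, Real.Angle.sin_coe, Complex.sin_arg, norm_kahler, him]
  rcases eq_or_ne x 0 with rfl | hx
  · simp
  rcases eq_or_ne y 0 with rfl | hy
  · simp
  have h : ‖x‖ * ‖y‖ ≠ 0 := mul_ne_zero (norm_ne_zero_iff.2 hx) (norm_ne_zero_iff.2 hy)
  field_simp

theorem areaForm_inv_norm_smul_right (x y : E) :
    o.areaForm x (‖y‖⁻¹ • y) = ‖x‖ * Real.Angle.sin (o.oangle x y) := by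
  rcases eq_or_ne y 0 with rfl | hy
  · simp
  rw [map_smul, smul_eq_mul, areaForm_eq_norm_mul_norm_mul_sin_oangle]
  field_simp [norm_ne_zero_iff.2 hy]

theorem sum_mul_sin_oangle_eq_zero {ι : Type*} [Fintype ι] {B : ι → ℝ} {v : ι → E}
    (hbal : ∑ i, B i • (‖v i‖⁻¹ • v i) = 0) (x : E) :
    ∑ i, B i * Real.Angle.sin (o.oangle x (v i)) = 0 := by
  rcases eq_or_ne x 0 with rfl | hx
  · simp
  have h := congrArg (o.areaForm x) hbal
  have hterm : ∀ i, o.areaForm x (B i • (‖v i‖⁻¹ • v i))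
      = ‖x‖ * (B i * Real.Angle.sin (o.oangle x (v i))) := fun i => by
    rw [map_smul, areaForm_inv_norm_smul_right, smul_eq_mul, mul_left_comm]
  rw [map_sum, map_zero, Finset.sum_congr rfl fun i _ => hterm i, ← Finset.mul_sum] at h
  exact (mul_eq_zero.1 h).resolve_left (norm_ne_zero_iff.2 hx)

theorem sum_mul_sin_sub_eq_zero {ι : Type*} [Fintype ι] {B : ι → ℝ} {v : ι → E} {x : E}
    {r : ι → ℝ} (hx : x ≠ 0) (hv : ∀ i, v i ≠ 0) (hr : ∀ i, o.oangle x (v i) = r i)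
    (hbal : ∑ i, B i • (‖v i‖⁻¹ • v i) = 0) (j : ι) :
    ∑ i, B i * Real.sin (r i - r j) = 0 := by
  rw [← o.sum_mul_sin_oangle_eq_zero hbal (v j)]
  refine Finset.sum_congr rfl fun i _ => ?_
  rw [← o.oangle_sub_left hx (hv j) (hv i), hr, hr, ← Real.Angle.coe_sub, Real.Angle.sin_coe]

theorem sin_angle_eq_abs_sin_oangle {x y : E} (hx : x ≠ 0) (hy : y ≠ 0) :
    Real.sin (angle x y) = |Real.Angle.sin (o.oangle x y)| := by
  rcases o.oangle_eq_angle_or_eq_neg_angle hx hy with h | h <;>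
    simp [h, Real.Angle.sin_coe, abs_of_nonneg (sin_angle_nonneg x y)]

theorem exists_oangle_eq_angle (o : Orientation ℝ E (Fin 2)) {x y : E} (hx : x ≠ 0)
    (hy : y ≠ 0) : ∃ o' : Orientation ℝ E (Fin 2), o'.oangle x y = angle x y := by
  rcases o.oangle_eq_angle_or_eq_neg_angle hx hy with h | h
  · exact ⟨o, h⟩
  · exact ⟨-o, by rw [o.oangle_neg_orientation_eq_neg, h, neg_neg]⟩

theorem exists_signed_angles {v : Fin 4 → E} {a₁ a₂ a₃ a₄ : ℝ} (hv : ∀ i, v i ≠ 0)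
    (ha₂ : angle (v 1) (v 2) = a₂) (ha₃ : angle (v 2) (v 3) = a₃) (ha₄ : angle (v 3) (v 0) = a₄)
    (h01 : o.oangle (v 0) (v 1) = a₁) :
    ∃ x₂ x₃ x₄ : ℝ, (x₂ = a₂ ∨ x₂ = -a₂) ∧ (x₃ = a₃ ∨ x₃ = -a₃) ∧ (x₄ = a₄ ∨ x₄ = -a₄) ∧
      ((a₁ + x₂ + x₃ + x₄ : ℝ) : Real.Angle) = 0 ∧
      ∀ i, o.oangle (v 0) (v i) = (![0, a₁, a₁ + x₂, a₁ + x₂ + x₃] i : ℝ) := by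
  have signed : ∀ {i j a}, angle (v i) (v j) = a →
      ∃ x : ℝ, o.oangle (v i) (v j) = x ∧ (x = a ∨ x = -a) := by
    rintro i j _ rfl
    rcases o.oangle_eq_angle_or_eq_neg_angle (hv i) (hv j) with h | h
    · exact ⟨_, h, .inl rfl⟩
    · exact ⟨_, h.trans (Real.Angle.coe_neg _).symm, .inr rfl⟩
  obtain ⟨x₂, hx₂, hx₂'⟩ := signed ha₂
  obtain ⟨x₃, hx₃, hx₃'⟩ := signed ha₃
  obtain ⟨x₄, hx₄, hx₄'⟩ := signed ha₄
  have h02 : o.oangle (v 0) (v 2) = (a₁ + x₂ : ℝ) := by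
    rw [← o.oangle_add (hv 0) (hv 1) (hv 2), h01, hx₂, ← Real.Angle.coe_add]
  have h03 : o.oangle (v 0) (v 3) = (a₁ + x₂ + x₃ : ℝ) := by
    rw [← o.oangle_add (hv 0) (hv 2) (hv 3), h02, hx₃, ← Real.Angle.coe_add]
  refine ⟨x₂, x₃, x₄, hx₂', hx₃', hx₄', ?_, ?_⟩
  · rw [← o.oangle_self (v 0), ← o.oangle_add (hv 0) (hv 3) (hv 0), h03, hx₄,
      ← Real.Angle.coe_add]
  · intro i
    fin_cases i
    · simp
    · simpa using h01
    · simpa using h02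
    · simpa using h03

theorem oangle_eq_of_balanced {v : Fin 4 → E} {a₁ a₂ a₃ a₄ : ℝ} (hv : ∀ i, v i ≠ 0)
    (h₁ : 0 < a₁ ∧ a₁ < π) (h₂ : 0 < a₂ ∧ a₂ < π) (h₃ : 0 < a₃ ∧ a₃ < π)
    (hsum : a₁ + a₂ + a₃ + a₄ = 2 * π) (htri : π < a₁ + a₂)
    (ha₂ : angle (v 1) (v 2) = a₂) (ha₃ : angle (v 2) (v 3) = a₃) (ha₄ : angle (v 3) (v 0) = a₄)
    {B : Fin 4 → ℝ} (hB : ∀ i, 0 < B i) (hbal : ∑ i, B i • (‖v i‖⁻¹ • v i) = 0)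
    (h01 : o.oangle (v 0) (v 1) = a₁) :
    ∀ i, o.oangle (v 0) (v i) = (![0, a₁, a₁ + a₂, a₁ + a₂ + a₃] i : ℝ) := by
  obtain ⟨x₂, x₃, x₄, hx₂, hx₃, hx₄, hclose, hr⟩ := o.exists_signed_angles hv ha₂ ha₃ ha₄ h01
  have hsin₁ := sin_pos_of_pos_of_lt_pi h₁.1 h₁.2
  have hsin₂ := sin_pos_of_pos_of_lt_pi h₂.1 h₂.2
  have hsin₃ := sin_pos_of_pos_of_lt_pi h₃.1 h₃.2
  have e₁ := o.sum_mul_sin_sub_eq_zero (hv 0) hv hr hbal 1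
  have e₃ := o.sum_mul_sin_sub_eq_zero (hv 0) hv hr hbal 3
  simp only [Fin.sum_univ_four, Matrix.cons_val, sub_self, sin_zero, mul_zero, add_zero] at e₁ e₃
  rcases signs_of_coe_sum_eq_zero h₁ h₂ h₃ (ha₄ ▸ angle_nonneg _ _) hsum htri hx₂ hx₃ hx₄
    hclose with ⟨_, _⟩ | ⟨_, _, h13⟩ | ⟨_, _, h23⟩ <;> subst x₂ x₃
  · exact hr
  · rw [show (0 : ℝ) - a₁ = -a₁ by ring, show a₁ + -a₂ - a₁ = -a₂ by ring,
      show a₁ + -a₂ + a₃ - a₁ = -(a₂ - a₃) by ring] at e₁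
    rw [show 0 - (a₁ + -a₂ + a₃) = a₂ - π by linarith,
      show a₁ - (a₁ + -a₂ + a₃) = a₂ - a₃ by ring,
      show a₁ + -a₂ - (a₁ + -a₂ + a₃) = -a₃ by ring] at e₃
    simp only [sin_neg, sin_sub_pi] at e₁ e₃
    have h₃₂ : 0 < B 3 * -sin (a₂ - a₃) := by
      nlinarith [mul_pos (hB 2) hsin₂, mul_pos (hB 0) hsin₁]
    have h₂₃ : 0 < B 1 * sin (a₂ - a₃) := by
      nlinarith [mul_pos (hB 2) hsin₃, mul_pos (hB 0) hsin₂]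
    linarith [pos_of_mul_pos_right h₃₂ (hB 3).le, pos_of_mul_pos_right h₂₃ (hB 1).le]
  · rw [show (0 : ℝ) - a₁ = -a₁ by ring, show a₁ + -a₂ - a₁ = -a₂ by ring,
      show a₁ + -a₂ + -a₃ - a₁ = -π by linarith] at e₁
    simp only [sin_neg, sin_pi] at e₁
    nlinarith [mul_pos (hB 2) hsin₂, mul_pos (hB 0) hsin₁]

end Orientation

theorem sin_angle_relations_of_balanced {E : Type*} [NormedAddCommGroup E]
    [InnerProductSpace ℝ E] [Fact (Module.finrank ℝ E = 2)] {v : Fin 4 → E} (hv : ∀ i, v i ≠ 0)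
    (h₁ : 0 < angle (v 0) (v 1) ∧ angle (v 0) (v 1) < π)
    (h₂ : 0 < angle (v 1) (v 2) ∧ angle (v 1) (v 2) < π)
    (h₃ : 0 < angle (v 2) (v 3) ∧ angle (v 2) (v 3) < π)
    (hsum : angle (v 0) (v 1) + angle (v 1) (v 2) + angle (v 2) (v 3) + angle (v 3) (v 0)
      = 2 * π)
    (htri : π < angle (v 0) (v 1) + angle (v 1) (v 2))
    {B : Fin 4 → ℝ} (hB : ∀ i, 0 < B i) (hbal : ∑ i, B i • (‖v i‖⁻¹ • v i) = 0) :
    B 1 * sin (angle (v 1) (v 2))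
        = B 0 * sin (angle (v 0) (v 2)) + B 3 * sin (angle (v 2) (v 3)) ∧
      B 2 * sin (angle (v 1) (v 2))
        = B 0 * sin (angle (v 0) (v 1)) + B 3 * sin (angle (v 0) (v 1) + angle (v 0) (v 3)) := by
  have := FiniteDimensional.of_fact_finrank_eq_two (K := ℝ) (V := E)
  obtain ⟨o, h01⟩ := (Module.finBasisOfFinrankEq ℝ E Fact.out).orientation.exists_oangle_eq_angle
    (hv 0) (hv 1)
  have hr := o.oangle_eq_of_balanced hv h₁ h₂ h₃ hsum htri rfl rfl rfl hB hbal h01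
  have e₁ := o.sum_mul_sin_sub_eq_zero (hv 0) hv hr hbal 1
  have e₂ := o.sum_mul_sin_sub_eq_zero (hv 0) hv hr hbal 2
  rw [angle_comm (v 0) (v 3)]
  set a₁ := angle (v 0) (v 1)
  set a₂ := angle (v 1) (v 2)
  set a₃ := angle (v 2) (v 3)
  set a₄ := angle (v 3) (v 0)
  have hψ : sin (angle (v 0) (v 2)) = -sin (a₁ + a₂) := by
    have h : 0 < sin (a₁ + a₂ - π) := sin_pos_of_pos_of_lt_pi (by linarith) (by linarith)
    rw [sin_sub_pi] at h
    rw [o.sin_angle_eq_abs_sin_oangle (hv 0) (hv 2), hr 2]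
    simp only [Matrix.cons_val, Real.Angle.sin_coe]
    exact abs_of_neg (neg_pos.1 h)
  simp only [Fin.sum_univ_four, Matrix.cons_val, sub_self, sin_zero, mul_zero, add_zero] at e₁ e₂
  rw [show (0 : ℝ) - a₁ = -a₁ by ring, show a₁ + a₂ - a₁ = a₂ by ring,
    show a₁ + a₂ + a₃ - a₁ = 2 * π - (a₁ + a₄) by linarith, sin_neg, sin_two_pi_sub] at e₁
  rw [show 0 - (a₁ + a₂) = -(a₁ + a₂) by ring, show a₁ - (a₁ + a₂) = -a₂ by ring,
    show a₁ + a₂ + a₃ - (a₁ + a₂) = a₃ by ring, sin_neg, sin_neg] at e₂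
  rw [hψ]
  exact ⟨by linarith, by linarith⟩

open EuclideanGeometry

/-- Indices are shifted: `A 0, …, A 3` and `B 0, …, B 3` are `A₁, …, A₄` and `B₁, …, B₄`. -/
theorem mixed_dynamic_plasticity_convex_quadrilateral_general
    (A : Fin 4 → EuclideanSpace ℝ (Fin 2))
    (A₀ : EuclideanSpace ℝ (Fin 2))
    (hne : ∀ i, A i ≠ A₀)
    (h12 : 0 < ∠ (A 0) A₀ (A 1) ∧ ∠ (A 0) A₀ (A 1) < Real.pi)
    (h23 : 0 < ∠ (A 1) A₀ (A 2) ∧ ∠ (A 1) A₀ (A 2) < Real.pi)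
    (h34 : 0 < ∠ (A 2) A₀ (A 3) ∧ ∠ (A 2) A₀ (A 3) < Real.pi)
    (hcyc : ∠ (A 0) A₀ (A 1) + ∠ (A 1) A₀ (A 2) + ∠ (A 2) A₀ (A 3)
        + ∠ (A 3) A₀ (A 0) = 2 * Real.pi)
    (htri : Real.pi < ∠ (A 0) A₀ (A 1) + ∠ (A 1) A₀ (A 2))
    (B : Fin 4 → ℝ) (hB : ∀ i, 0 < B i)
    (hbal : ∑ i, B i • (‖A i - A₀‖⁻¹ • (A i - A₀)) = 0)
    (c B₀ : ℝ)
    (hsum : ∑ i, B i = c)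
    (hflow : B 0 + B 1 + B 2 = B 3 + B₀) :
    B 3 = (c - B₀) / 2 ∧
    B 1 * Real.sin (∠ (A 1) A₀ (A 2))
      = B 0 * Real.sin (∠ (A 0) A₀ (A 2)) + B 3 * Real.sin (∠ (A 2) A₀ (A 3)) ∧
    B 2 * Real.sin (∠ (A 1) A₀ (A 2))
      = B 0 * Real.sin (∠ (A 0) A₀ (A 1))
        + B 3 * Real.sin (∠ (A 0) A₀ (A 1) + ∠ (A 0) A₀ (A 3)) := by
  have hv : ∀ i, A i - A₀ ≠ 0 := fun i => sub_ne_zero.2 (hne i)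
  have : Fact (Module.finrank ℝ (EuclideanSpace ℝ (Fin 2)) = 2) := ⟨finrank_euclideanSpace_fin⟩
  refine ⟨?_, sin_angle_relations_of_balanced hv h12 h23 h34 hcyc htri hB hbal⟩
  rw [Fin.sum_univ_four] at hsum
  linarith

/-- Mixed dynamic plasticity of convex quadrilaterals: for a convex quadrilateral
`A₁A₂A₃A₄` in cyclic order with `A₀` interior to it and to the triangle `A₁A₂A₃`
(encoded by the angle conditions at `A₀`: the four consecutive angles lie in `(0, π)`
and sum to `2π`, and `∠A₁A₀A₂ + ∠A₂A₀A₃ > π`), if the positive weights satisfy the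
balance condition at `A₀`, `∑ Bᵢ = c` and `B₁+B₂+B₃ = B₄+B₀`, then
`B₄ = (c − B₀)/2` and the plasticity relations hold. Indices are shifted:
`A 0, …, A 3` are `A₁, …, A₄`. -/
theorem mixed_dynamic_plasticity_convex_quadrilateral
    (A : Fin 4 → EuclideanSpace ℝ (Fin 2))
    (A₀ : EuclideanSpace ℝ (Fin 2))
    (hne : ∀ i, A i ≠ A₀)
    (h12 : 0 < ∠ (A 0) A₀ (A 1) ∧ ∠ (A 0) A₀ (A 1) < Real.pi)
    (h23 : 0 < ∠ (A 1) A₀ (A 2) ∧ ∠ (A 1) A₀ (A 2) < Real.pi)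
    (h34 : 0 < ∠ (A 2) A₀ (A 3) ∧ ∠ (A 2) A₀ (A 3) < Real.pi)
    (h41 : 0 < ∠ (A 3) A₀ (A 0) ∧ ∠ (A 3) A₀ (A 0) < Real.pi)
    (hcyc : ∠ (A 0) A₀ (A 1) + ∠ (A 1) A₀ (A 2) + ∠ (A 2) A₀ (A 3)
        + ∠ (A 3) A₀ (A 0) = 2 * Real.pi)
    (htri : Real.pi < ∠ (A 0) A₀ (A 1) + ∠ (A 1) A₀ (A 2))
    (B : Fin 4 → ℝ) (hB : ∀ i, 0 < B i)
    (hbal : ∑ i, B i • (‖A i - A₀‖⁻¹ • (A i - A₀)) = 0)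
    (c B₀ : ℝ)
    (hsum : ∑ i, B i = c)
    (hflow : B 0 + B 1 + B 2 = B 3 + B₀) :
    B 3 = (c - B₀) / 2 ∧
    B 1 * Real.sin (∠ (A 1) A₀ (A 2))
      = B 0 * Real.sin (∠ (A 0) A₀ (A 2)) + B 3 * Real.sin (∠ (A 2) A₀ (A 3)) ∧
    B 2 * Real.sin (∠ (A 1) A₀ (A 2))
      = B 0 * Real.sin (∠ (A 0) A₀ (A 1))
        + B 3 * Real.sin (∠ (A 0) A₀ (A 1) + ∠ (A 0) A₀ (A 3)) :=
  mixed_dynamic_plasticity_convex_quadrilateral_general A A₀ hne h12 h23 h34 hcyc htri B hB hbal c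
    B₀ hsum hflow
end
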